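/- arXiv:2105.06922 — 8 statements merged into one kernel-verified Lean document; each statement's English description precedes it below -/
import Mathlib

section
/- Let m, n be positive integers and let C be a Hermitian complex matrix with rows and columns indexed by Fin m × Fin n. Then the quantum optimal transport cost T_C is jointly convex: for all density matrices ρA, σA ∈ Ω_m, ρB, σB ∈ Ω_n and every real a with 0 ≤ a ≤ 1, T_C(a•ρA + (1−a)•σA, a•ρB + (1−a)•σB) ≤ a·T_C(ρA, ρB) + (1−a)·T_C(σA, σB). Moreover, if C is positive semidefinite then T_C(ρA, ρB) ≥ 0 for all ρA ∈ Ω_m and ρB ∈ Ω_n. -/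
open Matrix ComplexOrder

/-- A density matrix: positive semidefinite with trace one. -/
def IsDensityMatrix {k : Type*} [Fintype k] [DecidableEq k] (ρ : Matrix k k ℂ) : Prop :=
  ρ.PosSemidef ∧ ρ.trace = 1

/-- Partial trace over the second factor. -/
noncomputable def trB {m n : ℕ} (R : Matrix (Fin m × Fin n) (Fin m × Fin n) ℂ) :
    Matrix (Fin m) (Fin m) ℂ :=
  Matrix.of fun i j => ∑ p, R (i, p) (j, p)

/-- Partial trace over the first factor. -/
noncomputable def trA {m n : ℕ} (R : Matrix (Fin m × Fin n) (Fin m × Fin n) ℂ) :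
    Matrix (Fin n) (Fin n) ℂ :=
  Matrix.of fun p q => ∑ i, R (i, p) (i, q)

/-- The set of quantum couplings of two density matrices. -/
def QCouplings {m n : ℕ} (ρA : Matrix (Fin m) (Fin m) ℂ) (ρB : Matrix (Fin n) (Fin n) ℂ) :
    Set (Matrix (Fin m × Fin n) (Fin m × Fin n) ℂ) :=
  {R | IsDensityMatrix R ∧ trB R = ρA ∧ trA R = ρB}

/-- The quantum optimal transport cost. -/
noncomputable def QOT {m n : ℕ} (C : Matrix (Fin m × Fin n) (Fin m × Fin n) ℂ)
    (ρA : Matrix (Fin m) (Fin m) ℂ) (ρB : Matrix (Fin n) (Fin n) ℂ) : ℝ :=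
  sInf ((fun R => ((C * R).trace).re) '' QCouplings ρA ρB)

/-!
If `R` couples `(ρA, ρB)` and `S` couples `(σA, σB)`, then `a • R + (1 - a) • S` couples the
mixed marginals and its cost is `a` times the cost of `R` plus `1 - a` times that of `S`; taking
`R` and `S` `ε`-optimal gives convexity. The infimum is a genuine one because `ρA ⊗ₖ ρB` is a
coupling and the entries of a density matrix have norm at most one. For `C ≥ 0` and
`R = Dᴴ * D`, `tr (C * R) = tr (D * C * Dᴴ) ≥ 0`.
-/

namespace Matrix.PosSemidef

variable {k 𝕜 : Type*} [Fintype k] [RCLike 𝕜]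

open scoped MatrixOrder in
theorem exists_eq_gram {R : Matrix k k 𝕜} (hR : R.PosSemidef) :
    ∃ v : k → EuclideanSpace 𝕜 k, R = gram 𝕜 v := by
  classical
  obtain ⟨D, rfl⟩ := CStarAlgebra.nonneg_iff_eq_star_mul_self.mp hR.nonneg
  refine ⟨fun i => WithLp.toLp 2 fun l => D l i, ?_⟩
  ext i j
  simp [gram_apply, EuclideanSpace.inner_eq_star_dotProduct, mul_apply, dotProduct, mul_comm]

theorem norm_apply_le_re_trace {R : Matrix k k 𝕜} (hR : R.PosSemidef) (i j : k) :
    ‖R i j‖ ≤ RCLike.re R.trace := by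
  obtain ⟨v, rfl⟩ := hR.exists_eq_gram
  have hdiag (l : k) : ‖v l‖ ^ 2 ≤ RCLike.re (gram 𝕜 v).trace := by
    simp only [trace, diag_apply, gram_apply, map_sum, inner_self_eq_norm_sq]
    exact Finset.single_le_sum (fun l _ => sq_nonneg ‖v l‖) (Finset.mem_univ l)
  calc ‖gram 𝕜 v i j‖ ≤ ‖v i‖ * ‖v j‖ := norm_inner_le_norm (v i) (v j)
    _ ≤ RCLike.re (gram 𝕜 v).trace := by
      nlinarith [hdiag i, hdiag j, sq_nonneg (‖v i‖ - ‖v j‖)]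

theorem norm_trace_mul_le (C : Matrix k k 𝕜) {R : Matrix k k 𝕜} (hR : R.PosSemidef) :
    ‖(C * R).trace‖ ≤ (∑ p, ∑ q, ‖C p q‖) * RCLike.re R.trace := by
  calc ‖(C * R).trace‖ = ‖∑ p, ∑ q, C p q * R q p‖ := rfl
    _ ≤ ∑ p, ∑ q, ‖C p q‖ * ‖R q p‖ := by
      refine (norm_sum_le _ _).trans (Finset.sum_le_sum fun p _ => ?_)
      exact (norm_sum_le _ _).trans_eq (by simp only [norm_mul])
    _ ≤ ∑ p, ∑ q, ‖C p q‖ * RCLike.re R.trace := by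
      gcongr with p _ q _
      exact hR.norm_apply_le_re_trace q p
    _ = (∑ p, ∑ q, ‖C p q‖) * RCLike.re R.trace := by simp only [Finset.sum_mul]

open scoped MatrixOrder in
theorem trace_mul_nonneg {C R : Matrix k k 𝕜} (hC : C.PosSemidef) (hR : R.PosSemidef) :
    0 ≤ (C * R).trace := by
  classical
  obtain ⟨D, rfl⟩ := CStarAlgebra.nonneg_iff_eq_star_mul_self.mp hR.nonneg
  rw [← Matrix.mul_assoc, trace_mul_cycle]
  exact (hC.mul_mul_conjTranspose_same D).trace_nonneg

end Matrix.PosSemidef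

section Couplings

variable {m n : ℕ} {ρA σA : Matrix (Fin m) (Fin m) ℂ} {ρB σB : Matrix (Fin n) (Fin n) ℂ}

open scoped Kronecker in
theorem kronecker_mem_qCouplings (hA : IsDensityMatrix ρA) (hB : IsDensityMatrix ρB) :
    ρA ⊗ₖ ρB ∈ QCouplings ρA ρB := by
  refine ⟨⟨hA.1.kronecker hB.1, by rw [trace_kronecker, hA.2, hB.2, mul_one]⟩, ?_, ?_⟩
  · have htrB : ∑ p, ρB p p = 1 := hB.2
    ext i j
    simp [trB, ← Finset.mul_sum, htrB]
  · have htrA : ∑ i, ρA i i = 1 := hA.2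
    ext p q
    simp [trA, ← Finset.sum_mul, htrA]

theorem qCouplings_nonempty (hA : IsDensityMatrix ρA) (hB : IsDensityMatrix ρB) :
    (QCouplings ρA ρB).Nonempty :=
  ⟨_, kronecker_mem_qCouplings hA hB⟩

theorem convexComb_mem_qCouplings {R S : Matrix (Fin m × Fin n) (Fin m × Fin n) ℂ}
    (hR : R ∈ QCouplings ρA ρB) (hS : S ∈ QCouplings σA σB) {a : ℝ} (ha0 : 0 ≤ a) (ha1 : a ≤ 1) :
    a • R + (1 - a) • S ∈ QCouplings (a • ρA + (1 - a) • σA) (a • ρB + (1 - a) • σB) := by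
  obtain ⟨⟨hRpsd, hRtr⟩, rfl, rfl⟩ := hR
  obtain ⟨⟨hSpsd, hStr⟩, rfl, rfl⟩ := hS
  refine ⟨⟨(hRpsd.smul ha0).add (hSpsd.smul (sub_nonneg.mpr ha1)), ?_⟩, ?_, ?_⟩
  · simp [trace_add, trace_smul, hRtr, hStr]
  · ext i j
    simp [trB, Finset.sum_add_distrib, Finset.smul_sum]
  · ext p q
    simp [trA, Finset.sum_add_distrib, Finset.smul_sum]

theorem bddBelow_cost_qCouplings (C : Matrix (Fin m × Fin n) (Fin m × Fin n) ℂ) :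
    BddBelow ((fun R => ((C * R).trace).re) '' QCouplings ρA ρB) := by
  refine ⟨-∑ p, ∑ q, ‖C p q‖, ?_⟩
  rintro _ ⟨R, ⟨⟨hR, hRtr⟩, -, -⟩, rfl⟩
  have hnorm := hR.norm_trace_mul_le C
  rw [hRtr] at hnorm
  simp only [RCLike.one_re, mul_one] at hnorm
  linarith [neg_abs_le ((C * R).trace).re, Complex.abs_re_le_norm (C * R).trace]

theorem QOT_le_of_mem {C R : Matrix (Fin m × Fin n) (Fin m × Fin n) ℂ}
    (hR : R ∈ QCouplings ρA ρB) : QOT C ρA ρB ≤ ((C * R).trace).re :=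
  csInf_le (bddBelow_cost_qCouplings C) ⟨R, hR, rfl⟩

theorem exists_mem_qCouplings_lt_QOT_add (C : Matrix (Fin m × Fin n) (Fin m × Fin n) ℂ)
    (hA : IsDensityMatrix ρA) (hB : IsDensityMatrix ρB) {ε : ℝ} (hε : 0 < ε) :
    ∃ R ∈ QCouplings ρA ρB, ((C * R).trace).re < QOT C ρA ρB + ε := by
  obtain ⟨_, ⟨R, hR, rfl⟩, hlt⟩ := Real.lt_sInf_add_pos ((qCouplings_nonempty hA hB).image _) hε
  exact ⟨R, hR, hlt⟩

theorem QOT_convexComb_le (C : Matrix (Fin m × Fin n) (Fin m × Fin n) ℂ)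
    (hρA : IsDensityMatrix ρA) (hσA : IsDensityMatrix σA)
    (hρB : IsDensityMatrix ρB) (hσB : IsDensityMatrix σB) {a : ℝ} (ha0 : 0 ≤ a) (ha1 : a ≤ 1) :
    QOT C (a • ρA + (1 - a) • σA) (a • ρB + (1 - a) • σB) ≤
      a * QOT C ρA ρB + (1 - a) * QOT C σA σB := by
  refine le_of_forall_pos_le_add fun ε hε => ?_
  obtain ⟨R, hR, hRlt⟩ := exists_mem_qCouplings_lt_QOT_add C hρA hρB hε
  obtain ⟨S, hS, hSlt⟩ := exists_mem_qCouplings_lt_QOT_add C hσA hσB hε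
  have hcost : ((C * (a • R + (1 - a) • S)).trace).re =
      a * ((C * R).trace).re + (1 - a) * ((C * S).trace).re := by
    simp [Matrix.mul_add, trace_add, trace_smul]
  calc QOT C (a • ρA + (1 - a) • σA) (a • ρB + (1 - a) • σB)
      ≤ a * ((C * R).trace).re + (1 - a) * ((C * S).trace).re :=
        hcost ▸ QOT_le_of_mem (convexComb_mem_qCouplings hR hS ha0 ha1)
    _ ≤ a * (QOT C ρA ρB + ε) + (1 - a) * (QOT C σA σB + ε) := by
        gcongr
    _ = a * QOT C ρA ρB + (1 - a) * QOT C σA σB + ε := by ring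

theorem QOT_nonneg {C : Matrix (Fin m × Fin n) (Fin m × Fin n) ℂ} (hC : C.PosSemidef) :
    0 ≤ QOT C ρA ρB :=
  Real.sInf_nonneg <| by
    rintro _ ⟨R, ⟨⟨hR, -⟩, -, -⟩, rfl⟩
    exact (Complex.nonneg_iff.mp (hC.trace_mul_nonneg hR)).1

end Couplings

theorem qot_convex_and_nonneg_general (m n : ℕ)
    (C : Matrix (Fin m × Fin n) (Fin m × Fin n) ℂ) :
    (∀ (ρA σA : Matrix (Fin m) (Fin m) ℂ) (ρB σB : Matrix (Fin n) (Fin n) ℂ),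
      IsDensityMatrix ρA → IsDensityMatrix σA → IsDensityMatrix ρB → IsDensityMatrix σB →
      ∀ a : ℝ, 0 ≤ a → a ≤ 1 →
        QOT C (a • ρA + (1 - a) • σA) (a • ρB + (1 - a) • σB) ≤
          a * QOT C ρA ρB + (1 - a) * QOT C σA σB) ∧
    (C.PosSemidef →
      ∀ (ρA : Matrix (Fin m) (Fin m) ℂ) (ρB : Matrix (Fin n) (Fin n) ℂ),
        IsDensityMatrix ρA → IsDensityMatrix ρB → 0 ≤ QOT C ρA ρB) :=
  ⟨fun _ _ _ _ hρA hσA hρB hσB _ ha0 ha1 => QOT_convexComb_le C hρA hσA hρB hσB ha0 ha1,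
    fun hC _ _ _ _ => QOT_nonneg hC⟩

/-- joint convexity of the quantum optimal transport cost, and
nonnegativity when the cost matrix is positive semidefinite. -/
theorem qot_convex_and_nonneg (m n : ℕ) (hm : 0 < m) (hn : 0 < n)
    (C : Matrix (Fin m × Fin n) (Fin m × Fin n) ℂ) (hC : C.IsHermitian) :
    (∀ (ρA σA : Matrix (Fin m) (Fin m) ℂ) (ρB σB : Matrix (Fin n) (Fin n) ℂ),
      IsDensityMatrix ρA → IsDensityMatrix σA → IsDensityMatrix ρB → IsDensityMatrix σB →
      ∀ a : ℝ, 0 ≤ a → a ≤ 1 →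
        QOT C (a • ρA + (1 - a) • σA) (a • ρB + (1 - a) • σB) ≤
          a * QOT C ρA ρB + (1 - a) * QOT C σA σB) ∧
    (C.PosSemidef →
      ∀ (ρA : Matrix (Fin m) (Fin m) ℂ) (ρB : Matrix (Fin n) (Fin n) ℂ),
        IsDensityMatrix ρA → IsDensityMatrix ρB → 0 ≤ QOT C ρA ρB) :=
  qot_convex_and_nonneg_general m n C
end

section
/- Let ρA, ρB ∈ Ω_n. The coupling set Γ^Q(ρA, ρB) contains a matrix R of rank one if and only if ρA and ρB are isospectral, i.e., if and only if there exists a unitary n×n complex matrix U with ρB = U * ρA * Uᴴ. -/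
/-!
A rank-one density matrix is a pure state `ψ ψᴴ`. Reshaping `ψ : Fin n × Fin n → ℂ` into an
`n × n` matrix `M`, its partial traces become `M Mᴴ` and `(Mᴴ M)ᵀ`. Since `M Mᴴ` and `Mᴴ M` have
the same characteristic polynomial, and Hermitian matrices are unitarily equivalent exactly when
their characteristic polynomials agree, isospectrality is necessary. Conversely, write `ρA = Cᴴ C`;
then `C Cᴴ` is isospectral to `ρBᵀ`, say `ρBᵀ = W C Cᴴ Wᴴ`, and `M = Cᴴ Wᴴ` is the reshaped pure
state of a rank-one coupling.
-/

open Matrix ComplexOrder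

namespace Matrix

variable {𝕜 k : Type*} [RCLike 𝕜] [Fintype k] [DecidableEq k]

theorem rank_eq_zero_iff {K m n : Type*} [Field K] [Fintype n] [DecidableEq n]
    {A : Matrix m n K} : A.rank = 0 ↔ A = 0 := by
  rw [rank, Submodule.finrank_eq_zero, LinearMap.range_eq_bot, ← toLin'_apply',
    LinearEquiv.map_eq_zero_iff]

theorem PosSemidef.exists_eq_vecMulVec_star_of_rank_eq_one {R : Matrix k k 𝕜}
    (hR : R.PosSemidef) (h : R.rank = 1) : ∃ ψ : k → 𝕜, R = vecMulVec ψ (star ψ) := by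
  obtain ⟨⟨i₀, _⟩, hunique⟩ := Fintype.card_eq_one_iff.mp <|
    hR.isHermitian.rank_eq_card_non_zero_eigs ▸ h
  have hzero : ∀ i ≠ i₀, hR.isHermitian.eigenvalues i = 0 := fun i hi => by
    by_contra hne
    exact hi (congrArg Subtype.val (hunique ⟨i, hne⟩))
  set s : k → 𝕜 := Pi.single i₀ (Real.sqrt (hR.isHermitian.eigenvalues i₀) : 𝕜)
  have hdiag : diagonal (RCLike.ofReal ∘ hR.isHermitian.eigenvalues) = vecMulVec s (star s) := by
    ext i j
    rcases eq_or_ne i i₀ with rfl | hi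
    · rcases eq_or_ne j i with rfl | hj
      · simp [s, vecMulVec_apply, ← RCLike.ofReal_mul,
          Real.mul_self_sqrt (hR.eigenvalues_nonneg _)]
      · simp [s, vecMulVec_apply, hj, Ne.symm hj]
    · simp [s, vecMulVec_apply, hi, diagonal_apply, hzero i hi]
  refine ⟨(hR.isHermitian.eigenvectorUnitary : Matrix k k 𝕜) *ᵥ s, ?_⟩
  conv_lhs => rw [hR.isHermitian.spectral_theorem, Unitary.conjStarAlgAut_apply, hdiag]
  rw [mul_vecMulVec, vecMulVec_mul, star_mulVec, star_eq_conjTranspose]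

theorem IsHermitian.exists_unitary_conj_eq_iff_charpoly_eq {A B : Matrix k k 𝕜}
    (hA : A.IsHermitian) (hB : B.IsHermitian) :
    (∃ U : Matrix k k 𝕜, Uᴴ * U = 1 ∧ B = U * A * Uᴴ) ↔ A.charpoly = B.charpoly := by
  constructor
  · rintro ⟨U, hU, rfl⟩
    rw [charpoly_mul_comm, ← mul_assoc, hU, one_mul]
  · intro h
    set P := hA.eigenvectorUnitary
    set Q := hB.eigenvectorUnitary
    refine ⟨(Q * star P : unitary (Matrix k k 𝕜)), Unitary.coe_star_mul_self _, ?_⟩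
    rw [← star_eq_conjTranspose, ← Unitary.conjStarAlgAut_apply (S := 𝕜),
      Unitary.conjStarAlgAut_mul_apply, hA.conjStarAlgAut_star_eigenvectorUnitary,
      (hA.eigenvalues_eq_eigenvalues_iff hB).mpr h, ← hB.spectral_theorem]

open scoped MatrixOrder in
theorem PosSemidef.exists_mul_conjTranspose_eq_and_conjTranspose_mul_eq_iff
    {A B : Matrix k k 𝕜} (hA : A.PosSemidef) (hB : B.IsHermitian) :
    (∃ M : Matrix k k 𝕜, M * Mᴴ = A ∧ Mᴴ * M = B) ↔ A.charpoly = B.charpoly := by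
  constructor
  · rintro ⟨M, rfl, rfl⟩
    exact charpoly_mul_comm _ _
  · intro h
    obtain ⟨C, rfl⟩ := CStarAlgebra.nonneg_iff_eq_star_mul_self.mp hA.nonneg
    rw [star_eq_conjTranspose, charpoly_mul_comm] at h
    obtain ⟨W, hW, rfl⟩ :=
      ((isHermitian_mul_conjTranspose_self C).exists_unitary_conj_eq_iff_charpoly_eq hB).mpr h
    refine ⟨Cᴴ * Wᴴ, ?_, ?_⟩
    · simp only [conjTranspose_mul, conjTranspose_conjTranspose, star_eq_conjTranspose, mul_assoc]
      rw [← mul_assoc Wᴴ, hW, one_mul]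
    · simp only [conjTranspose_mul, conjTranspose_conjTranspose, mul_assoc]

end Matrix

section PartialTrace

variable {m n : ℕ}

theorem trace_trB (R : Matrix (Fin m × Fin n) (Fin m × Fin n) ℂ) : (trB R).trace = R.trace := by
  simp [trB, trace, Fintype.sum_prod_type]

theorem trB_vecMulVec_uncurry (M : Matrix (Fin m) (Fin n) ℂ) :
    trB (vecMulVec (Function.uncurry M) (star (Function.uncurry M))) = M * Mᴴ := by
  ext i j
  rfl

theorem trA_vecMulVec_uncurry (M : Matrix (Fin m) (Fin n) ℂ) :
    trA (vecMulVec (Function.uncurry M) (star (Function.uncurry M))) = (Mᴴ * M)ᵀ := by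
  ext p q
  simp only [trA, of_apply, transpose_apply, mul_apply, conjTranspose_apply]
  exact Finset.sum_congr rfl fun i _ => mul_comm _ _

theorem exists_rank_one_mem_QCouplings_iff {ρA : Matrix (Fin m) (Fin m) ℂ}
    {ρB : Matrix (Fin n) (Fin n) ℂ} (hA : ρA.trace = 1) :
    (∃ R ∈ QCouplings ρA ρB, R.rank = 1) ↔
      ∃ M : Matrix (Fin m) (Fin n) ℂ, M * Mᴴ = ρA ∧ Mᴴ * M = ρBᵀ := by
  constructor
  · rintro ⟨R, ⟨⟨hR, -⟩, hRA, hRB⟩, hrank⟩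
    obtain ⟨ψ, rfl⟩ := hR.exists_eq_vecMulVec_star_of_rank_eq_one hrank
    obtain ⟨M, rfl⟩ : ∃ M : Matrix (Fin m) (Fin n) ℂ, Function.uncurry M = ψ :=
      ⟨of (Function.curry ψ), Function.uncurry_curry ψ⟩
    rw [trB_vecMulVec_uncurry] at hRA
    rw [trA_vecMulVec_uncurry] at hRB
    exact ⟨M, hRA, by rw [← hRB, transpose_transpose]⟩
  · rintro ⟨M, hMA, hMB⟩
    set R := vecMulVec (Function.uncurry M) (star (Function.uncurry M))
    have hRA : trB R = ρA := by rw [trB_vecMulVec_uncurry, hMA]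
    have htrace : R.trace = 1 := by rw [← trace_trB, hRA, hA]
    have hR0 : R ≠ 0 := fun h => by simp [h] at htrace
    refine ⟨R, ⟨⟨posSemidef_vecMulVec_self_star _, htrace⟩, hRA, ?_⟩, ?_⟩
    · rw [trA_vecMulVec_uncurry, hMB, transpose_transpose]
    · exact le_antisymm (rank_vecMulVec_le _ _)
        (Nat.one_le_iff_ne_zero.mpr (mt rank_eq_zero_iff.mp hR0))

end PartialTrace

/-- the coupling set contains a rank-one matrix iff the two density
matrices are isospectral (unitarily equivalent). -/
theorem rank_one_coupling_iff_isospectral (n : ℕ)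
    (ρA ρB : Matrix (Fin n) (Fin n) ℂ)
    (hA : IsDensityMatrix ρA) (hB : IsDensityMatrix ρB) :
    (∃ R ∈ QCouplings ρA ρB, R.rank = 1) ↔
      ∃ U : Matrix (Fin n) (Fin n) ℂ, Uᴴ * U = 1 ∧ ρB = U * ρA * Uᴴ := by
  rw [exists_rank_one_mem_QCouplings_iff hA.2,
    hA.1.exists_mul_conjTranspose_eq_and_conjTranspose_mul_eq_iff hB.1.isHermitian.transpose,
    charpoly_transpose, hA.1.isHermitian.exists_unitary_conj_eq_iff_charpoly_eq hB.1.isHermitian]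
end

section
/- Let ρA, ρB ∈ Ω_n, let U be a unitary n×n complex matrix, and let C be a Hermitian matrix indexed by Fin n × Fin n. Then (U ⊗ U) · Γ^Q(ρA, ρB) · (Uᴴ ⊗ Uᴴ) = Γ^Q(U ρA Uᴴ, U ρB Uᴴ) and T_C(ρA, ρB) = T_{(U⊗U) C (Uᴴ⊗Uᴴ)}(U ρA Uᴴ, U ρB Uᴴ). In particular, since (U ⊗ U) C^Q (Uᴴ ⊗ Uᴴ) = C^Q, the quantum optimal transport cost with cost matrix C^Q is unitarily invariant: T_{C^Q}(ρA, ρB) = T_{C^Q}(U ρA Uᴴ, U ρB Uᴴ). -/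
open Matrix ComplexOrder

/-- The SWAP matrix on `Fin n × Fin n`. -/
noncomputable def swapM (n : ℕ) : Matrix (Fin n × Fin n) (Fin n × Fin n) ℂ :=
  Matrix.of fun x y => if x.1 = y.2 ∧ x.2 = y.1 then 1 else 0

/-- The quantum cost matrix `C^Q = (1/2) (I - S)`. -/
noncomputable def CQ (n : ℕ) : Matrix (Fin n × Fin n) (Fin n × Fin n) ℂ :=
  (1 / 2 : ℂ) • (1 - swapM n)

/-- Kronecker product of square matrices indexed by `Fin m` and `Fin n`. -/
noncomputable def kron {m n : ℕ} (A : Matrix (Fin m) (Fin m) ℂ)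
    (B : Matrix (Fin n) (Fin n) ℂ) : Matrix (Fin m × Fin n) (Fin m × Fin n) ℂ :=
  Matrix.of fun x y => A x.1 y.1 * B x.2 y.2

section Aux

open Kronecker

lemma kron_mul {m n : ℕ} (A A' : Matrix (Fin m) (Fin m) ℂ) (B B' : Matrix (Fin n) (Fin n) ℂ) :
    kron A B * kron A' B' = kron (A * A') (B * B') :=
  (Matrix.mul_kronecker_mul A A' B B').symm

lemma kron_conjT {m n : ℕ} (A : Matrix (Fin m) (Fin m) ℂ) (B : Matrix (Fin n) (Fin n) ℂ) :
    (kron A B)ᴴ = kron Aᴴ Bᴴ := by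
  ext x y; simp [kron, conjTranspose_apply, mul_comm]

lemma kron_one {m n : ℕ} :
    kron (1 : Matrix (Fin m) (Fin m) ℂ) (1 : Matrix (Fin n) (Fin n) ℂ) = 1 :=
  Matrix.one_kronecker_one

lemma trB_conj {n : ℕ} (U : Matrix (Fin n) (Fin n) ℂ) (hU : Uᴴ * U = 1)
    (R : Matrix (Fin n × Fin n) (Fin n × Fin n) ℂ) :
    trB (kron U U * R * kron Uᴴ Uᴴ) = U * trB R * Uᴴ := by
  have key : ∀ b d : Fin n, (∑ p, U p b * star (U p d)) = if d = b then 1 else 0 := by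
    intro b d
    have h := congrFun (congrFun hU d) b
    simp only [Matrix.mul_apply, conjTranspose_apply, Matrix.one_apply] at h
    rw [← h]
    exact Finset.sum_congr rfl fun p _ => mul_comm _ _
  ext i j
  simp only [trB, Matrix.of_apply, Matrix.mul_apply, kron, conjTranspose_apply,
    Fintype.sum_prod_type, Finset.sum_mul, Finset.mul_sum]
  conv_lhs => rw [Finset.sum_comm]
  conv_lhs => enter [2, c]; rw [Finset.sum_comm]
  conv_lhs => enter [2, c, 2, d]; rw [Finset.sum_comm]
  conv_lhs => enter [2, c, 2, d, 2, a]; rw [Finset.sum_comm]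
  have inner : ∀ c d a b : Fin n,
      (∑ p, U i a * U p b * R (a, b) (c, d) * (star (U j c) * star (U p d))) =
        (if d = b then 1 else 0) * (U i a * R (a, b) (c, d) * star (U j c)) := by
    intro c d a b
    rw [← key b d, Finset.sum_mul]
    exact Finset.sum_congr rfl fun p _ => by ring
  simp only [inner, ite_mul, one_mul, zero_mul, Finset.sum_ite_eq, Finset.mem_univ, if_true]
  exact Finset.sum_congr rfl fun c _ => Finset.sum_comm

lemma trA_conj {n : ℕ} (U : Matrix (Fin n) (Fin n) ℂ) (hU : Uᴴ * U = 1)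
    (R : Matrix (Fin n × Fin n) (Fin n × Fin n) ℂ) :
    trA (kron U U * R * kron Uᴴ Uᴴ) = U * trA R * Uᴴ := by
  have key : ∀ a c : Fin n, (∑ i, U i a * star (U i c)) = if c = a then 1 else 0 := by
    intro a c
    have h := congrFun (congrFun hU c) a
    simp only [Matrix.mul_apply, conjTranspose_apply, Matrix.one_apply] at h
    rw [← h]
    exact Finset.sum_congr rfl fun i _ => mul_comm _ _
  ext p q
  simp only [trA, Matrix.of_apply, Matrix.mul_apply, kron, conjTranspose_apply,
    Fintype.sum_prod_type, Finset.sum_mul, Finset.mul_sum]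
  conv_lhs => rw [Finset.sum_comm]
  conv_lhs => enter [2, c]; rw [Finset.sum_comm]
  conv_lhs => enter [2, c, 2, d]; rw [Finset.sum_comm]
  conv_lhs => enter [2, c, 2, d, 2, a]; rw [Finset.sum_comm]
  have inner : ∀ c d a b : Fin n,
      (∑ i, U i a * U p b * R (a, b) (c, d) * (star (U i c) * star (U q d))) =
        (if c = a then 1 else 0) * (U p b * R (a, b) (c, d) * star (U q d)) := by
    intro c d a b
    rw [← key a c, Finset.sum_mul]
    exact Finset.sum_congr rfl fun i _ => by ring
  simp only [inner]
  conv_lhs => enter [2, c, 2, d]; rw [Finset.sum_comm]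
  simp only [ite_mul, one_mul, zero_mul, Finset.sum_ite_eq, Finset.mem_univ, if_true]
  rw [Finset.sum_comm]
  exact Finset.sum_congr rfl fun d _ => Finset.sum_comm

lemma swap_conj {n : ℕ} (U : Matrix (Fin n) (Fin n) ℂ) (hU2 : U * Uᴴ = 1) :
    kron U U * swapM n * kron Uᴴ Uᴴ = swapM n := by
  have key : ∀ i q : Fin n, (∑ d, U i d * star (U q d)) = if i = q then 1 else 0 := by
    intro i q
    have h := congrFun (congrFun hU2 i) q
    simpa [Matrix.mul_apply, Matrix.one_apply] using h
  ext x y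
  simp only [Matrix.mul_apply, kron, swapM, Matrix.of_apply, conjTranspose_apply,
    Fintype.sum_prod_type, mul_ite, mul_one, mul_zero, ite_mul, zero_mul, one_mul, ite_and,
    Finset.sum_ite_eq, Finset.sum_ite_eq', Finset.mem_univ, if_true]
  have inner : ∀ c d : Fin n,
      (∑ a, ∑ b, if a = d then if b = c then U x.1 a * U x.2 b else 0 else 0) =
        U x.1 d * U x.2 c := by
    intro c d
    rw [Finset.sum_eq_single d (fun a _ ha => by simp [ha]) (by simp)]
    simp
  simp only [inner]
  calc (∑ c, ∑ d, U x.1 d * U x.2 c * (star (U y.1 c) * star (U y.2 d)))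
      = (∑ c, U x.2 c * star (U y.1 c)) * (∑ d, U x.1 d * star (U y.2 d)) := by
        rw [Finset.sum_mul_sum]
        exact Finset.sum_congr rfl fun c _ => Finset.sum_congr rfl fun d _ => by ring
    _ = (if x.2 = y.1 then 1 else 0) * (if x.1 = y.2 then 1 else 0) := by rw [key, key]
    _ = if x.1 = y.2 then if x.2 = y.1 then 1 else 0 else 0 := by split_ifs <;> ring

end Aux

/-- unitary covariance of the coupling set and of the quantum optimal
transport cost, and unitary invariance for the cost matrix `C^Q`. -/
theorem qot_unitary_covariance (n : ℕ) (ρA ρB : Matrix (Fin n) (Fin n) ℂ)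
    (hA : IsDensityMatrix ρA) (hB : IsDensityMatrix ρB)
    (U : Matrix (Fin n) (Fin n) ℂ) (hU : Uᴴ * U = 1)
    (C : Matrix (Fin n × Fin n) (Fin n × Fin n) ℂ) (hC : C.IsHermitian) :
    ((fun R => kron U U * R * kron Uᴴ Uᴴ) '' QCouplings ρA ρB =
        QCouplings (U * ρA * Uᴴ) (U * ρB * Uᴴ)) ∧
    QOT C ρA ρB = QOT (kron U U * C * kron Uᴴ Uᴴ) (U * ρA * Uᴴ) (U * ρB * Uᴴ) ∧
    kron U U * CQ n * kron Uᴴ Uᴴ = CQ n ∧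
    QOT (CQ n) ρA ρB = QOT (CQ n) (U * ρA * Uᴴ) (U * ρB * Uᴴ) := by
  have hU2 : U * Uᴴ = 1 := mul_eq_one_comm.mp hU
  have hWV : kron Uᴴ Uᴴ * kron U U = 1 := by rw [kron_mul, hU, kron_one]
  have hVW : kron U U * kron Uᴴ Uᴴ = 1 := by rw [kron_mul, hU2, kron_one]
  have hVct : (kron U U)ᴴ = kron Uᴴ Uᴴ := kron_conjT U U
  have hWct : (kron Uᴴ Uᴴ)ᴴ = kron U U := by rw [kron_conjT]; simp
  have trace_conj : ∀ M : Matrix (Fin n × Fin n) (Fin n × Fin n) ℂ,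
      (kron U U * M * kron Uᴴ Uᴴ).trace = M.trace := by
    intro M; rw [Matrix.trace_mul_cycle, hWV, Matrix.one_mul]
  have cancel : ∀ M : Matrix (Fin n) (Fin n) ℂ, Uᴴ * (U * M * Uᴴ) * U = M := by
    intro M
    calc Uᴴ * (U * M * Uᴴ) * U = (Uᴴ * U) * M * (Uᴴ * U) := by simp only [Matrix.mul_assoc]
      _ = M := by rw [hU, Matrix.one_mul, Matrix.mul_one]
  have trB'_conj := trB_conj Uᴴ (by simpa using hU2)
  simp only [conjTranspose_conjTranspose] at trB'_conj
  have trA'_conj := trA_conj Uᴴ (by simpa using hU2)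
  simp only [conjTranspose_conjTranspose] at trA'_conj
  have hset : (fun R => kron U U * R * kron Uᴴ Uᴴ) '' QCouplings ρA ρB =
      QCouplings (U * ρA * Uᴴ) (U * ρB * Uᴴ) := by
    ext R'
    constructor
    · rintro ⟨R, ⟨⟨hpsd, htr⟩, hBR, hAR⟩, rfl⟩
      refine ⟨⟨?_, ?_⟩, ?_, ?_⟩
      · rw [← hVct]; exact hpsd.mul_mul_conjTranspose_same _
      · rw [trace_conj, htr]
      · rw [trB_conj U hU, hBR]
      · rw [trA_conj U hU, hAR]
    · rintro ⟨⟨hpsd, htr⟩, hBR, hAR⟩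
      refine ⟨kron Uᴴ Uᴴ * R' * kron U U, ⟨⟨?_, ?_⟩, ?_, ?_⟩, ?_⟩
      · rw [← hWct]; exact hpsd.mul_mul_conjTranspose_same _
      · rw [Matrix.trace_mul_cycle, hVW, Matrix.one_mul, htr]
      · rw [trB'_conj, hBR]; exact cancel ρA
      · rw [trA'_conj, hAR]; exact cancel ρB
      · calc kron U U * (kron Uᴴ Uᴴ * R' * kron U U) * kron Uᴴ Uᴴ
            = (kron U U * kron Uᴴ Uᴴ) * R' * (kron U U * kron Uᴴ Uᴴ) := by
              simp only [Matrix.mul_assoc]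
          _ = R' := by rw [hVW, Matrix.one_mul, Matrix.mul_one]
  have hqot : ∀ D : Matrix (Fin n × Fin n) (Fin n × Fin n) ℂ,
      QOT D ρA ρB = QOT (kron U U * D * kron Uᴴ Uᴴ) (U * ρA * Uᴴ) (U * ρB * Uᴴ) := by
    intro D
    unfold QOT
    rw [← hset, ← Set.image_comp]
    refine congrArg sInf (Set.image_congr fun R _ => ?_)
    simp only [Function.comp_apply]
    have hmul : (kron U U * D * kron Uᴴ Uᴴ) * (kron U U * R * kron Uᴴ Uᴴ)
        = kron U U * (D * R) * kron Uᴴ Uᴴ := by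
      calc (kron U U * D * kron Uᴴ Uᴴ) * (kron U U * R * kron Uᴴ Uᴴ)
          = kron U U * D * (kron Uᴴ Uᴴ * kron U U) * R * kron Uᴴ Uᴴ := by
            simp only [Matrix.mul_assoc]
        _ = kron U U * (D * R) * kron Uᴴ Uᴴ := by
            rw [hWV, Matrix.mul_one]; simp only [Matrix.mul_assoc]
    rw [hmul, trace_conj]
  have hCQ : kron U U * CQ n * kron Uᴴ Uᴴ = CQ n := by
    calc kron U U * CQ n * kron Uᴴ Uᴴ
        = (1/2 : ℂ) • (kron U U * (1 - swapM n) * kron Uᴴ Uᴴ) := by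
          simp only [CQ, Matrix.mul_smul, Matrix.smul_mul, one_div]
      _ = (1/2 : ℂ) • (1 - swapM n) := by
          rw [Matrix.mul_sub, Matrix.sub_mul, Matrix.mul_one, hVW, swap_conj U hU2]
      _ = CQ n := by rw [CQ, one_div]
  exact ⟨hset, hqot C, hCQ, (hqot (CQ n)).trans (by rw [hCQ])⟩
end

section
/- Let ν : (Fin n → ℝ) → ℝ be a norm (ν(x) = 0 iff x = 0, ν(c • x) = |c|·ν(x), ν(x + y) ≤ ν(x) + ν(y)), and let f : ℝ → ℝ be continuous on [0,∞), strictly increasing on [0,∞), and nonnegative on [0,∞). For positive semidefinite n×n complex matrices ρ, σ define D(ρ, σ) := sup over unitary n×n matrices U of ν( fun i => f(Re((Uᴴ * ρ * U) i i)) − f(Re((Uᴴ * σ * U) i i)) ) (this supremum is attained by compactness of the unitary group). Then D is a metric on the set of positive semidefinite n×n complex matrices: D(ρ,σ) = D(σ,ρ), D(ρ,σ) = 0 if and only if ρ = σ, and D(ρ,τ) ≤ D(ρ,σ) + D(σ,τ). -/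
open Matrix ComplexOrder

/-- The distance obtained by maximizing, over all unitaries `U`, a norm of the
difference of `f` applied to the diagonals of the conjugated matrices. -/
noncomputable def unitaryDiagDist (n : ℕ) (ν : (Fin n → ℝ) → ℝ) (f : ℝ → ℝ)
    (ρ σ : Matrix (Fin n) (Fin n) ℂ) : ℝ :=
  sSup {r : ℝ | ∃ U : Matrix (Fin n) (Fin n) ℂ, Uᴴ * U = 1 ∧
    r = ν (fun i => f (((Uᴴ * ρ * U) i i).re) - f (((Uᴴ * σ * U) i i).re))}

/-!
Each unitary `U` gives a pseudometric `(ρ, σ) ↦ ν (f ∘ diag (Uᴴ ρ U) - f ∘ diag (Uᴴ σ U))`, and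
`unitaryDiagDist` is their supremum. A supremum of pseudometrics is symmetric and satisfies the
triangle inequality as soon as it is finite (`sSup` of an unbounded set is junk), and it is finite
here because the diagonal of `Uᴴ ρ U` lies in `[0, tr ρ]`. If the distance vanishes, injectivity
of `f` on `[0, ∞)` makes the diagonals of `Uᴴ ρ U` and `Uᴴ σ U` agree for every `U`; for the `U`
diagonalizing the Hermitian matrix `ρ - σ` this says that its eigenvalues vanish.
-/

theorem Seminorm.le_mul_sum_apply_single {ι : Type*} [Fintype ι] [DecidableEq ι]
    (p : Seminorm ℝ (ι → ℝ)) {x : ι → ℝ} {M : ℝ} (hx : ∀ i, |x i| ≤ M) :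
    p x ≤ M * ∑ i, p (Pi.single i 1) :=
  calc p x = p (∑ i, x i • Pi.single i 1) := by
        simp_rw [← Pi.single_smul', smul_eq_mul, mul_one, Finset.univ_sum_single]
    _ ≤ ∑ i, p (x i • Pi.single i 1) :=
        Finset.le_sum_of_subadditive p (map_zero p).le (map_add_le_add p) _ _
    _ ≤ ∑ i, M * p (Pi.single i 1) := by
        gcongr with i
        rw [map_smul_eq_mul, Real.norm_eq_abs]
        exact mul_le_mul_of_nonneg_right (hx i) (apply_nonneg p _)
    _ = M * ∑ i, p (Pi.single i 1) := (Finset.mul_sum _ _ _).symm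

section SupDist

variable {ι X E : Type*} [AddCommGroup E] [Module ℝ E]

noncomputable def supDist (P : ι → Prop) (p : Seminorm ℝ E) (g : ι → X → E) (x y : X) : ℝ :=
  sSup {r : ℝ | ∃ U, P U ∧ r = p (g U x - g U y)}

variable {P : ι → Prop} {p : Seminorm ℝ E} {g : ι → X → E} {x y z : X}

theorem supDist_comm (x y : X) : supDist P p g x y = supDist P p g y x := by
  simp only [supDist, map_sub_rev p (g _ x)]

theorem le_supDist {C : ℝ} (hC : ∀ U, P U → p (g U x - g U y) ≤ C) {U : ι} (hU : P U) :
    p (g U x - g U y) ≤ supDist P p g x y :=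
  le_csSup ⟨C, by rintro r ⟨V, hV, rfl⟩; exact hC V hV⟩ ⟨U, hU, rfl⟩

theorem supDist_self (hP : ∃ U, P U) (x : X) : supDist P p g x x = 0 := by
  have : {r : ℝ | ∃ U, P U ∧ r = p (g U x - g U x)} = {0} := by
    ext r
    simp only [sub_self, map_zero, Set.mem_ofPred_eq, Set.mem_singleton_iff]
    exact ⟨fun ⟨_, _, hr⟩ => hr, fun hr => hP.imp fun _ hU => ⟨hU, hr⟩⟩
  rw [supDist, this, csSup_singleton]

theorem eq_of_supDist_eq_zero (hp : ∀ v, p v = 0 → v = 0) {C : ℝ}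
    (hC : ∀ U, P U → p (g U x - g U y) ≤ C) (h : supDist P p g x y = 0) {U : ι} (hU : P U) :
    g U x = g U y :=
  sub_eq_zero.mp <| hp _ <| le_antisymm (h ▸ le_supDist hC hU) (apply_nonneg p _)

theorem supDist_triangle (hP : ∃ U, P U) {C C' : ℝ} (hxy : ∀ U, P U → p (g U x - g U y) ≤ C)
    (hyz : ∀ U, P U → p (g U y - g U z) ≤ C') :
    supDist P p g x z ≤ supDist P p g x y + supDist P p g y z := by
  obtain ⟨U₀, hU₀⟩ := hP
  refine csSup_le ⟨_, U₀, hU₀, rfl⟩ ?_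
  rintro r ⟨U, hU, rfl⟩
  calc p (g U x - g U z) = p ((g U x - g U y) + (g U y - g U z)) := by rw [sub_add_sub_cancel]
    _ ≤ p (g U x - g U y) + p (g U y - g U z) := map_add_le_add p _ _
    _ ≤ supDist P p g x y + supDist P p g y z := add_le_add (le_supDist hxy hU) (le_supDist hyz hU)

end SupDist

section ConjDiag

variable {m : Type*} [Fintype m]

def conjDiagRe (U A : Matrix m m ℂ) : m → ℝ := fun i => ((Uᴴ * A * U) i i).re

theorem Matrix.PosSemidef.re_diag_mem_Icc {A : Matrix m m ℂ} (hA : A.PosSemidef) (i : m) :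
    (A i i).re ∈ Set.Icc 0 A.trace.re :=
  ⟨(Complex.nonneg_iff.mp hA.diag_nonneg).1,
    (Complex.le_def.mp (Finset.single_le_sum (f := fun j => A j j) (fun _ _ => hA.diag_nonneg)
      (Finset.mem_univ i))).1⟩

theorem Matrix.trace_conjTranspose_mul_mul_of_mul_eq_one {R : Type*} [CommSemiring R] [Star R]
    [DecidableEq m] {U : Matrix m m R} (hU : Uᴴ * U = 1) (A : Matrix m m R) :
    (Uᴴ * A * U).trace = A.trace := by
  rw [trace_mul_cycle, mul_eq_one_comm.mp hU, one_mul]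

theorem conjDiagRe_mem_Icc [DecidableEq m] {U A : Matrix m m ℂ} (hU : Uᴴ * U = 1)
    (hA : A.PosSemidef) (i : m) : conjDiagRe U A i ∈ Set.Icc 0 A.trace.re := by
  have := (hA.conjTranspose_mul_mul_same U).re_diag_mem_Icc i
  rwa [trace_conjTranspose_mul_mul_of_mul_eq_one hU] at this

theorem conjDiagRe_sub (U A B : Matrix m m ℂ) :
    conjDiagRe U (A - B) = conjDiagRe U A - conjDiagRe U B := by
  ext i
  simp [conjDiagRe, mul_sub, sub_mul]

theorem Matrix.IsHermitian.eq_zero_of_forall_conjDiagRe_eq_zero [DecidableEq m]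
    {A : Matrix m m ℂ} (hA : A.IsHermitian)
    (h : ∀ U : Matrix m m ℂ, Uᴴ * U = 1 → conjDiagRe U A = 0) : A = 0 := by
  set U : Matrix m m ℂ := ↑hA.eigenvectorUnitary
  have hU : Uᴴ * U = 1 := Unitary.star_mul_self_of_mem hA.eigenvectorUnitary.2
  have hdiag : Uᴴ * A * U = diagonal (RCLike.ofReal ∘ hA.eigenvalues) := by
    rw [← hA.conjStarAlgAut_star_eigenvectorUnitary, Unitary.conjStarAlgAut_star_apply,
      star_eq_conjTranspose]
  refine hA.eigenvalues_eq_zero_iff.mp (funext fun i => ?_)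
  simpa [conjDiagRe, hdiag] using congrFun (h U hU) i

theorem seminorm_comp_conjDiagRe_sub_le [DecidableEq m] (p : Seminorm ℝ (m → ℝ)) {f : ℝ → ℝ}
    (hf : MonotoneOn f (Set.Ici 0)) {U A B : Matrix m m ℂ} (hU : Uᴴ * U = 1)
    (hA : A.PosSemidef) (hB : B.PosSemidef) :
    p (f ∘ conjDiagRe U A - f ∘ conjDiagRe U B) ≤
      (f A.trace.re - f 0 + (f B.trace.re - f 0)) * ∑ i, p (Pi.single i 1) := by
  refine p.le_mul_sum_apply_single fun i => ?_
  obtain ⟨ha₀, haA⟩ := conjDiagRe_mem_Icc hU hA i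
  obtain ⟨hb₀, hbB⟩ := conjDiagRe_mem_Icc hU hB i
  have hfa := hf Set.self_mem_Ici ha₀ ha₀
  have hfb := hf Set.self_mem_Ici hb₀ hb₀
  have hfA := hf ha₀ (ha₀.trans haA) haA
  have hfB := hf hb₀ (hb₀.trans hbB) hbB
  rw [Pi.sub_apply, Function.comp_apply, Function.comp_apply, abs_sub_le_iff]
  constructor <;> linarith

theorem eq_of_forall_comp_conjDiagRe_eq [DecidableEq m] {f : ℝ → ℝ}
    (hf : StrictMonoOn f (Set.Ici 0)) {A B : Matrix m m ℂ} (hA : A.PosSemidef) (hB : B.PosSemidef)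
    (h : ∀ U : Matrix m m ℂ, Uᴴ * U = 1 → f ∘ conjDiagRe U A = f ∘ conjDiagRe U B) : A = B := by
  refine sub_eq_zero.mp <| (hA.isHermitian.sub hB.isHermitian).eq_zero_of_forall_conjDiagRe_eq_zero
    fun U hU => ?_
  rw [conjDiagRe_sub, sub_eq_zero]
  exact funext fun i => hf.injOn (conjDiagRe_mem_Icc hU hA i).1 (conjDiagRe_mem_Icc hU hB i).1
    (congrFun (h U hU) i)

end ConjDiag

theorem unitaryDiagDist_is_metric_general (n : ℕ) (ν : (Fin n → ℝ) → ℝ) (f : ℝ → ℝ)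
    (hν0 : ∀ x : Fin n → ℝ, ν x = 0 ↔ x = 0)
    (hνsmul : ∀ (c : ℝ) (x : Fin n → ℝ), ν (c • x) = |c| * ν x)
    (hνadd : ∀ x y : Fin n → ℝ, ν (x + y) ≤ ν x + ν y)
    (hfm : StrictMonoOn f (Set.Ici 0)) :
    (∀ ρ σ : Matrix (Fin n) (Fin n) ℂ, ρ.PosSemidef → σ.PosSemidef →
      unitaryDiagDist n ν f ρ σ = unitaryDiagDist n ν f σ ρ) ∧
    (∀ ρ σ : Matrix (Fin n) (Fin n) ℂ, ρ.PosSemidef → σ.PosSemidef →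
      (unitaryDiagDist n ν f ρ σ = 0 ↔ ρ = σ)) ∧
    (∀ ρ σ τ : Matrix (Fin n) (Fin n) ℂ, ρ.PosSemidef → σ.PosSemidef → τ.PosSemidef →
      unitaryDiagDist n ν f ρ τ ≤
        unitaryDiagDist n ν f ρ σ + unitaryDiagDist n ν f σ τ) := by
  let p : Seminorm ℝ (Fin n → ℝ) := .of ν hνadd fun c x => by rw [Real.norm_eq_abs, hνsmul]
  have hD : unitaryDiagDist n ν f = supDist (fun U => Uᴴ * U = 1) p fun U A => f ∘ conjDiagRe U A :=
    rfl
  have hunitary : ∃ U : Matrix (Fin n) (Fin n) ℂ, Uᴴ * U = 1 := ⟨1, by simp⟩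
  have hbdd {ρ σ : Matrix (Fin n) (Fin n) ℂ} (hρ : ρ.PosSemidef) (hσ : σ.PosSemidef) :=
    fun U hU => seminorm_comp_conjDiagRe_sub_le p hfm.monotoneOn (U := U) hU hρ hσ
  refine ⟨fun ρ σ _ _ => hD ▸ supDist_comm ρ σ, fun ρ σ hρ hσ => ⟨fun h => ?_, ?_⟩,
    fun ρ σ τ hρ hσ hτ => hD ▸ supDist_triangle hunitary (hbdd hρ hσ) (hbdd hσ hτ)⟩
  · rw [hD] at h
    exact eq_of_forall_comp_conjDiagRe_eq hfm hρ hσ fun U hU =>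
      eq_of_supDist_eq_zero (fun v => (hν0 v).mp) (hbdd hρ hσ) h hU
  · rintro rfl
    exact hD ▸ supDist_self hunitary ρ

/-- `unitaryDiagDist` is a metric on positive semidefinite matrices. -/
theorem unitaryDiagDist_is_metric (n : ℕ) (ν : (Fin n → ℝ) → ℝ) (f : ℝ → ℝ)
    (hν0 : ∀ x : Fin n → ℝ, ν x = 0 ↔ x = 0)
    (hνsmul : ∀ (c : ℝ) (x : Fin n → ℝ), ν (c • x) = |c| * ν x)
    (hνadd : ∀ x y : Fin n → ℝ, ν (x + y) ≤ ν x + ν y)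
    (hfc : ContinuousOn f (Set.Ici 0))
    (hfm : StrictMonoOn f (Set.Ici 0))
    (hf0 : ∀ x ∈ Set.Ici (0 : ℝ), 0 ≤ f x) :
    (∀ ρ σ : Matrix (Fin n) (Fin n) ℂ, ρ.PosSemidef → σ.PosSemidef →
      unitaryDiagDist n ν f ρ σ = unitaryDiagDist n ν f σ ρ) ∧
    (∀ ρ σ : Matrix (Fin n) (Fin n) ℂ, ρ.PosSemidef → σ.PosSemidef →
      (unitaryDiagDist n ν f ρ σ = 0 ↔ ρ = σ)) ∧
    (∀ ρ σ τ : Matrix (Fin n) (Fin n) ℂ, ρ.PosSemidef → σ.PosSemidef → τ.PosSemidef →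
      unitaryDiagDist n ν f ρ τ ≤
        unitaryDiagDist n ν f ρ σ + unitaryDiagDist n ν f σ τ) :=
  unitaryDiagDist_is_metric_general n ν f hν0 hνsmul hνadd hfm
end

section
/- Let m ≤ n, let ι : Fin m → Fin n be the canonical embedding, and let C^Q_{m,n} be the Hermitian matrix indexed by Fin m × Fin n with entries C^Q_{m,n} (i,p) (j,q) = C^Q (ι i, p) (ι j, q), where C^Q is the cost matrix on Fin n × Fin n. Then for all probability vectors pA ∈ ℝ^m and pB ∈ ℝ^n, T_{C^Q_{m,n}}(diag(pA), diag(pB)) equals the infimum over X ∈ Γ^cl(pA, pB) of (1/2)·[ ∑_{i<j in Fin m} ( X i (ι j) + X j (ι i) − 2·√(X i (ι j) · X j (ι i)) ) + ∑_{i ∈ Fin m} ∑_{p ∈ Fin n with p.val ≥ m} X i p ]. -/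
open Matrix ComplexOrder

/-- The set of classical couplings of two probability vectors. -/
def clCouplings {m n : ℕ} (pA : Fin m → ℝ) (pB : Fin n → ℝ) :
    Set (Matrix (Fin m) (Fin n) ℝ) :=
  {X | (∀ i p, 0 ≤ X i p) ∧ (∀ i, ∑ p, X i p = pA i) ∧ (∀ p, ∑ i, X i p = pB p)}

/-- The classical optimal transport cost. -/
noncomputable def clOT {m n : ℕ} (Ccl : Matrix (Fin m) (Fin n) ℝ)
    (pA : Fin m → ℝ) (pB : Fin n → ℝ) : ℝ :=
  sInf ((fun X => ∑ i, ∑ p, Ccl i p * X i p) '' clCouplings pA pB)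

/-! Only the diagonal `X i p = R (i,p) (i,p)` of a coupling `R` of the diagonal marginals and its
swap entries `R (i, ι j) (j, ι i)` enter `Tr (C R) = ½ (Tr R - ∑ᵢⱼ R (i, ι j) (j, ι i))`. The
diagonal is a classical coupling, and positivity bounds each swap entry by
`√(X i (ι j)) √(X j (ι i))`, so `Tr (C R)` dominates the classical functional at `X`. Conversely,
the Gram matrix with diagonal `X` whose swap entries are exactly these geometric means is a quantum
coupling attaining the functional at `X`. Hence the two sets of values dominate each other and have
the same infimum. -/

open Finset

theorem Fin.sum_univ_eq_sum_castLE_add {M : Type*} [AddCommMonoid M] {m n : ℕ} (h : m ≤ n)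
    (f : Fin n → M) :
    ∑ p, f p = ∑ j : Fin m, f (Fin.castLE h j) + ∑ p : Fin n, if m ≤ (p : ℕ) then f p else 0 := by
  have hmap : univ.map (Fin.castLEEmb h) = univ.filter fun p : Fin n => (p : ℕ) < m := by
    ext p
    simp only [mem_map, mem_univ, true_and, mem_filter, Fin.coe_castLEEmb]
    exact ⟨by rintro ⟨j, rfl⟩; exact j.isLt, fun hp => ⟨⟨p, hp⟩, rfl⟩⟩
  rw [← sum_filter_add_sum_filter_not univ fun p : Fin n => (p : ℕ) < m, ← hmap, sum_map,
    sum_filter]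
  simp only [not_lt, Fin.coe_castLEEmb]

theorem sum_ite_lt_add_swap {M ι : Type*} [AddCommGroup M] [Fintype ι] [LinearOrder ι]
    (g : ι → ι → M) :
    ∑ i, ∑ j, (if i < j then g i j + g j i else 0) = ∑ i, ∑ j, g i j - ∑ i, g i i := by
  have hswap : ∑ i, ∑ j, (if i < j then g j i else 0) = ∑ i, ∑ j, if j < i then g i j else 0 :=
    sum_comm
  have htrichotomy : ∀ i j, (if i < j then g i j else 0) + (if j < i then g i j else 0) =
      g i j - if i = j then g i j else 0 := by
    intro i j
    rcases lt_trichotomy i j with hij | rfl | hij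
    · simp [hij, hij.not_gt, hij.ne]
    · simp
    · simp [hij, hij.not_gt, hij.ne']
  calc ∑ i, ∑ j, (if i < j then g i j + g j i else 0)
      = ∑ i, ∑ j, ((if i < j then g i j else 0) + if j < i then g i j else 0) := by
        simp only [ite_add_zero, sum_add_distrib, hswap]
    _ = ∑ i, ∑ j, g i j - ∑ i, g i i := by
        simp only [htrichotomy, sum_sub_distrib, sum_ite_eq, mem_univ, if_true]

theorem Matrix.PosSemidef.re_apply_le_sqrt {ι : Type*} [Fintype ι] {A : Matrix ι ι ℂ}
    (hA : A.PosSemidef) (x y : ι) : (A x y).re ≤ √((A x x).re * (A y y).re) := by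
  have hdet := (hA.submatrix ![x, y]).det_nonneg
  rw [det_fin_two] at hdet
  simp only [submatrix_apply, cons_val_zero, cons_val_one] at hdet
  rw [← hA.1.apply y x, ← hA.1.coe_re_apply_self x, ← hA.1.coe_re_apply_self y,
    Complex.nonneg_iff] at hdet
  simp only [RCLike.re_to_complex, Complex.coe_algebraMap, RCLike.star_def, Complex.sub_re,
    Complex.mul_re, Complex.ofReal_re, Complex.ofReal_im, Complex.conj_re, Complex.conj_im] at hdet
  exact (le_abs_self _).trans (Real.abs_le_sqrt (by nlinarith [hdet.1, sq_nonneg (A x y).im]))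

theorem Matrix.posSemidef_of_fiberwise {R ι κ : Type*} [CommRing R] [PartialOrder R] [StarRing R]
    [StarOrderedRing R] [Fintype ι] [Fintype κ] [DecidableEq κ] (f : ι → κ) (v : ι → R) :
    (Matrix.of fun x y => if f x = f y then star (v x) * v y else 0).PosSemidef := by
  convert posSemidef_conjTranspose_mul_self (Matrix.of fun k x => if f x = k then v x else 0)
    using 1
  ext x y
  simp [Matrix.mul_apply, apply_ite star, ite_mul, mul_ite, eq_comm]

def castLEFst {m n : ℕ} (h : m ≤ n) : Fin m × Fin n → Fin n × Fin n :=
  Prod.map (Fin.castLE h) id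

noncomputable def CQmn {m n : ℕ} (h : m ≤ n) : Matrix (Fin m × Fin n) (Fin m × Fin n) ℂ :=
  (CQ n).submatrix (castLEFst h) (castLEFst h)

theorem trace_swapM_submatrix_mul {m n : ℕ} (h : m ≤ n)
    (R : Matrix (Fin m × Fin n) (Fin m × Fin n) ℂ) :
    ((swapM n).submatrix (castLEFst h) (castLEFst h) * R).trace =
      ∑ i, ∑ j, R (i, Fin.castLE h j) (j, Fin.castLE h i) := by
  rw [sum_comm]
  simp only [Matrix.trace, Matrix.diag_apply, Matrix.mul_apply, Matrix.submatrix_apply, swapM,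
    castLEFst, Matrix.of_apply, Prod.map, id, Fintype.sum_prod_type, ite_and, ite_mul, zero_mul]
  refine sum_congr rfl fun i _ => ?_
  rw [sum_comm]
  simp

theorem trace_CQmn_mul {m n : ℕ} (h : m ≤ n) (R : Matrix (Fin m × Fin n) (Fin m × Fin n) ℂ) :
    (CQmn h * R).trace =
      (1 / 2 : ℂ) * (R.trace - ∑ i, ∑ j, R (i, Fin.castLE h j) (j, Fin.castLE h i)) := by
  have hinj : Function.Injective (castLEFst h) :=
    (Fin.castLE_injective h).prodMap Function.injective_id
  have hCQmn : CQmn h = (1 / 2 : ℂ) • (1 - (swapM n).submatrix (castLEFst h) (castLEFst h)) := by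
    rw [CQmn, CQ, ← Matrix.submatrix_one _ hinj]
    rfl
  rw [hCQmn, Matrix.smul_mul, Matrix.trace_smul, Matrix.sub_mul, Matrix.one_mul, Matrix.trace_sub,
    trace_swapM_submatrix_mul, smul_eq_mul]

noncomputable def clCostCQmn {m n : ℕ} (h : m ≤ n) (X : Matrix (Fin m) (Fin n) ℝ) : ℝ :=
  (1 / 2) *
    ((∑ i : Fin m, ∑ j : Fin m,
        if i < j then
          X i (Fin.castLE h j) + X j (Fin.castLE h i) -
            2 * Real.sqrt (X i (Fin.castLE h j) * X j (Fin.castLE h i))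
        else 0) +
      ∑ i : Fin m, ∑ p : Fin n, if m ≤ (p : ℕ) then X i p else 0)

noncomputable def swapOverlap {m n : ℕ} (h : m ≤ n) (X : Matrix (Fin m) (Fin n) ℝ) : ℝ :=
  ∑ i, ∑ j, √(X i (Fin.castLE h j)) * √(X j (Fin.castLE h i))

theorem clCostCQmn_eq {m n : ℕ} (h : m ≤ n) {X : Matrix (Fin m) (Fin n) ℝ}
    (hX : ∀ i p, 0 ≤ X i p) :
    clCostCQmn h X = 1 / 2 * (∑ i, ∑ p, X i p - swapOverlap h X) := by
  obtain ⟨g, hg⟩ : ∃ g : Fin m → Fin m → ℝ, ∀ i j,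
      g i j = X i (Fin.castLE h j) - √(X i (Fin.castLE h j)) * √(X j (Fin.castLE h i)) :=
    ⟨_, fun _ _ => rfl⟩
  have hpairs : ∀ i j : Fin m, X i (Fin.castLE h j) + X j (Fin.castLE h i) -
      2 * √(X i (Fin.castLE h j) * X j (Fin.castLE h i)) = g i j + g j i := by
    intro i j
    rw [hg, hg, Real.sqrt_mul (hX _ _)]
    ring
  have hdiag : ∀ i, g i i = 0 := fun i => by
    rw [hg, Real.mul_self_sqrt (hX _ _), sub_self]
  have hoffdiag : (∑ i : Fin m, ∑ j : Fin m, if i < j then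
      X i (Fin.castLE h j) + X j (Fin.castLE h i) -
        2 * √(X i (Fin.castLE h j) * X j (Fin.castLE h i)) else 0) =
      ∑ i, ∑ j, X i (Fin.castLE h j) - swapOverlap h X := by
    simp only [hpairs, sum_ite_lt_add_swap g, hdiag, sum_const_zero, sub_zero]
    simp only [hg, sum_sub_distrib, swapOverlap]
  have htotal : ∑ i, ∑ p, X i p = ∑ i, ∑ j, X i (Fin.castLE h j) +
      ∑ i : Fin m, ∑ p : Fin n, if m ≤ (p : ℕ) then X i p else 0 := by
    rw [← sum_add_distrib]
    exact sum_congr rfl fun i _ => Fin.sum_univ_eq_sum_castLE_add h _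
  rw [clCostCQmn, hoffdiag, htotal]
  ring

noncomputable def diagRe {m n : ℕ} (R : Matrix (Fin m × Fin n) (Fin m × Fin n) ℂ) :
    Matrix (Fin m) (Fin n) ℝ :=
  Matrix.of fun i p => (R (i, p) (i, p)).re

section diagRe

variable {m n : ℕ} {R : Matrix (Fin m × Fin n) (Fin m × Fin n) ℂ}

theorem diagRe_nonneg (hR : R.PosSemidef) (i : Fin m) (p : Fin n) : 0 ≤ diagRe R i p :=
  (Complex.nonneg_iff.mp hR.diag_nonneg).1

theorem diagRe_mem_clCouplings {pA : Fin m → ℝ} {pB : Fin n → ℝ}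
    (hR : R ∈ QCouplings (Matrix.diagonal fun i => (pA i : ℂ))
      (Matrix.diagonal fun p => (pB p : ℂ))) :
    diagRe R ∈ clCouplings pA pB := by
  obtain ⟨⟨hpsd, -⟩, hB, hA⟩ := hR
  refine ⟨diagRe_nonneg hpsd, fun i => ?_, fun p => ?_⟩
  · simpa [trB, diagRe, Complex.re_sum] using congrArg Complex.re (congrFun (congrFun hB i) i)
  · simpa [trA, diagRe, Complex.re_sum] using congrArg Complex.re (congrFun (congrFun hA p) p)

theorem le_re_trace_CQmn_mul (h : m ≤ n) (hR : R.PosSemidef) :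
    1 / 2 * (∑ i, ∑ p, diagRe R i p - swapOverlap h (diagRe R)) ≤ ((CQmn h * R).trace).re := by
  have hoverlap : ∑ i, ∑ j, (R (i, Fin.castLE h j) (j, Fin.castLE h i)).re ≤
      swapOverlap h (diagRe R) := sum_le_sum fun i _ => sum_le_sum fun j _ =>
    (hR.re_apply_le_sqrt _ _).trans_eq (Real.sqrt_mul (diagRe_nonneg hR _ _) _)
  have htrace : (R.trace).re = ∑ i, ∑ p, diagRe R i p := by
    simp [Matrix.trace, Fintype.sum_prod_type, Complex.re_sum, diagRe]
  rw [trace_CQmn_mul, show (1 / 2 : ℂ) = ((1 / 2 : ℝ) : ℂ) by norm_num, Complex.re_ofReal_mul]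
  simp only [Complex.sub_re, htrace, Complex.re_sum]
  linarith

end diagRe

/-- `(i, p)` and `(j, q)` interact iff `{ι i, p} = {ι j, q}`: on the diagonal and for the swap
pairs `(i, ι j)`, `(j, ι i)`. -/
noncomputable def swapCoupling {m n : ℕ} (h : m ≤ n) (X : Matrix (Fin m) (Fin n) ℝ) :
    Matrix (Fin m × Fin n) (Fin m × Fin n) ℂ :=
  Matrix.of fun x y =>
    if s(Fin.castLE h x.1, x.2) = s(Fin.castLE h y.1, y.2) then
      star (√(X x.1 x.2) : ℂ) * (√(X y.1 y.2) : ℂ)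
    else 0

section swapCoupling

variable {m n : ℕ} (h : m ≤ n) {X : Matrix (Fin m) (Fin n) ℝ}

theorem swapCoupling_posSemidef (X : Matrix (Fin m) (Fin n) ℝ) : (swapCoupling h X).PosSemidef :=
  Matrix.posSemidef_of_fiberwise (fun x : Fin m × Fin n => s(Fin.castLE h x.1, x.2))
    fun x => (√(X x.1 x.2) : ℂ)

theorem swapCoupling_apply_of_eq {x y : Fin m × Fin n}
    (hxy : s(Fin.castLE h x.1, x.2) = s(Fin.castLE h y.1, y.2)) :
    swapCoupling h X x y = ((√(X x.1 x.2) * √(X y.1 y.2) : ℝ) : ℂ) := by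
  rw [swapCoupling, Matrix.of_apply, if_pos hxy, Complex.star_def, Complex.conj_ofReal,
    Complex.ofReal_mul]

theorem swapCoupling_apply_of_ne {x y : Fin m × Fin n}
    (hxy : s(Fin.castLE h x.1, x.2) ≠ s(Fin.castLE h y.1, y.2)) : swapCoupling h X x y = 0 := by
  rw [swapCoupling, Matrix.of_apply, if_neg hxy]

theorem swapCoupling_apply_self (hX : ∀ i p, 0 ≤ X i p) (x : Fin m × Fin n) :
    swapCoupling h X x x = X x.1 x.2 := by
  rw [swapCoupling_apply_of_eq h rfl, Real.mul_self_sqrt (hX _ _)]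

theorem trace_swapCoupling (hX : ∀ i p, 0 ≤ X i p) :
    (swapCoupling h X).trace = ((∑ i, ∑ p, X i p : ℝ) : ℂ) := by
  simp [Matrix.trace, Fintype.sum_prod_type, swapCoupling_apply_self h hX]

theorem trB_swapCoupling (hX : ∀ i p, 0 ≤ X i p) :
    trB (swapCoupling h X) = Matrix.diagonal fun i => ((∑ p, X i p : ℝ) : ℂ) := by
  ext i j
  rcases eq_or_ne i j with rfl | hij
  · simp [trB, swapCoupling_apply_self h hX]
  · rw [trB, Matrix.of_apply]
    refine (sum_eq_zero fun p _ => swapCoupling_apply_of_ne h ?_).trans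
      (Matrix.diagonal_apply_ne _ hij).symm
    rw [Ne, Sym2.eq_iff]
    rintro (⟨hi, -⟩ | ⟨hi, hj⟩)
    · exact hij (Fin.castLE_injective h hi)
    · exact hij (Fin.castLE_injective h (hi.trans hj))

theorem trA_swapCoupling (hX : ∀ i p, 0 ≤ X i p) :
    trA (swapCoupling h X) = Matrix.diagonal fun p => ((∑ i, X i p : ℝ) : ℂ) := by
  ext p q
  rcases eq_or_ne p q with rfl | hpq
  · simp [trA, swapCoupling_apply_self h hX]
  · rw [trA, Matrix.of_apply]
    refine (sum_eq_zero fun i _ => swapCoupling_apply_of_ne h ?_).trans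
      (Matrix.diagonal_apply_ne _ hpq).symm
    rw [Ne, Sym2.eq_iff]
    rintro (⟨-, hp⟩ | ⟨hq, hp⟩)
    · exact hpq hp
    · exact hpq (hp.trans hq)

theorem swapCoupling_mem_QCouplings {pA : Fin m → ℝ} {pB : Fin n → ℝ} (hpA : ∑ i, pA i = 1)
    (hX : X ∈ clCouplings pA pB) :
    swapCoupling h X ∈
      QCouplings (Matrix.diagonal fun i => (pA i : ℂ)) (Matrix.diagonal fun p => (pB p : ℂ)) := by
  obtain ⟨hX0, hrow, hcol⟩ := hX
  refine ⟨⟨swapCoupling_posSemidef h X, ?_⟩, ?_, ?_⟩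
  · rw [trace_swapCoupling h hX0]
    simp [hrow, hpA]
  · rw [trB_swapCoupling h hX0]
    simp only [hrow]
  · rw [trA_swapCoupling h hX0]
    simp only [hcol]

theorem re_trace_CQmn_mul_swapCoupling (hX : ∀ i p, 0 ≤ X i p) :
    ((CQmn h * swapCoupling h X).trace).re = 1 / 2 * (∑ i, ∑ p, X i p - swapOverlap h X) := by
  have hswap : ∀ i j, swapCoupling h X (i, Fin.castLE h j) (j, Fin.castLE h i) =
      ((√(X i (Fin.castLE h j)) * √(X j (Fin.castLE h i)) : ℝ) : ℂ) :=
    fun i j => swapCoupling_apply_of_eq h Sym2.eq_swap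
  have hcomplex : (1 / 2 : ℂ) * (((∑ i, ∑ p, X i p : ℝ) : ℂ) -
      ∑ i, ∑ j, ((√(X i (Fin.castLE h j)) * √(X j (Fin.castLE h i)) : ℝ) : ℂ)) =
      ((1 / 2 * (∑ i, ∑ p, X i p - swapOverlap h X) : ℝ) : ℂ) := by
    push_cast [swapOverlap]
    ring
  rw [trace_CQmn_mul, trace_swapCoupling h hX]
  simp only [hswap, hcomplex, Complex.ofReal_re]

end swapCoupling

theorem qot_diag_CQmn_general (m n : ℕ) (h : m ≤ n)
    (pA : Fin m → ℝ) (pB : Fin n → ℝ)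
    (hpA : (∀ i, 0 ≤ pA i) ∧ ∑ i, pA i = 1) :
    QOT (Matrix.of fun (x y : Fin m × Fin n) =>
        CQ n (Fin.castLE h x.1, x.2) (Fin.castLE h y.1, y.2))
      (Matrix.diagonal fun i => (pA i : ℂ)) (Matrix.diagonal fun p => (pB p : ℂ)) =
    sInf ((fun X : Matrix (Fin m) (Fin n) ℝ =>
        (1 / 2) *
          ((∑ i : Fin m, ∑ j : Fin m,
              if i < j then
                X i (Fin.castLE h j) + X j (Fin.castLE h i) -
                  2 * Real.sqrt (X i (Fin.castLE h j) * X j (Fin.castLE h i))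
              else 0) +
            ∑ i : Fin m, ∑ p : Fin n, if m ≤ (p : ℕ) then X i p else 0)) ''
      clCouplings pA pB) := by
  change sInf ((fun R => ((CQmn h * R).trace).re) '' _) = sInf (clCostCQmn h '' _)
  refine csInf_eq_csInf_of_forall_exists_le ?_ ?_
  · rintro _ ⟨R, hR, rfl⟩
    refine ⟨_, ⟨diagRe R, diagRe_mem_clCouplings hR, rfl⟩, ?_⟩
    rw [clCostCQmn_eq h (diagRe_nonneg hR.1.1)]
    exact le_re_trace_CQmn_mul h hR.1.1
  · rintro _ ⟨X, hX, rfl⟩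
    refine ⟨_, ⟨swapCoupling h X, swapCoupling_mem_QCouplings h hpA.2 hX, rfl⟩, ?_⟩
    exact ((re_trace_CQmn_mul_swapCoupling h hX.1).trans (clCostCQmn_eq h hX.1).symm).le

/-- closed form of the quantum optimal transport cost for diagonal
marginals and the restricted cost matrix `C^Q_{m,n}`, as a minimum of a concave-type
functional over classical couplings. -/
theorem qot_diag_CQmn (m n : ℕ) (h : m ≤ n)
    (pA : Fin m → ℝ) (pB : Fin n → ℝ)
    (hpA : (∀ i, 0 ≤ pA i) ∧ ∑ i, pA i = 1)
    (hpB : (∀ p, 0 ≤ pB p) ∧ ∑ p, pB p = 1) :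
    QOT (Matrix.of fun (x y : Fin m × Fin n) =>
        CQ n (Fin.castLE h x.1, x.2) (Fin.castLE h y.1, y.2))
      (Matrix.diagonal fun i => (pA i : ℂ)) (Matrix.diagonal fun p => (pB p : ℂ)) =
    sInf ((fun X : Matrix (Fin m) (Fin n) ℝ =>
        (1 / 2) *
          ((∑ i : Fin m, ∑ j : Fin m,
              if i < j then
                X i (Fin.castLE h j) + X j (Fin.castLE h i) -
                  2 * Real.sqrt (X i (Fin.castLE h j) * X j (Fin.castLE h i))
              else 0) +
            ∑ i : Fin m, ∑ p : Fin n, if m ≤ (p : ℕ) then X i p else 0)) ''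
      clCouplings pA pB) :=
  qot_diag_CQmn_general m n h pA pB hpA
end

section
/- Let s = (s₁, s₂) and t = (t₁, t₂) be probability vectors in ℝ². Then, for n = 2, T_{C^Q}(diag(s), diag(t)) = (1/2)·max( (√s₁ − √t₁)², (√s₂ − √t₂)² ). -/
open Matrix ComplexOrder

/-!
Only the weights `b, c` of `|01⟩, |10⟩` and the coherence between them see the swap: the cost of
a coupling `R` is `(b + c - 2 Re R₀₁,₁₀) / 2`, and positivity gives `Re R₀₁,₁₀ ≤ √(b c)`, so the
cost is at least `(√b - √c)² / 2`. Diagonal marginals force `s₀ = a + b`, `t₀ = a + c`,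
`s₁ = c + d`, `t₁ = b + d` with `a, d ≥ 0` the weights of `|00⟩, |11⟩`; since adding a common
amount to two numbers only brings their square roots closer, `(√b - √c)²` dominates both
`(√sᵢ - √tᵢ)²`. Equality holds for the coupling carrying `b, c` on the pure state
`√b |01⟩ + √c |10⟩` with the smallest admissible common part (`a = 0` or `d = 0`).
-/

theorem Matrix.PosSemidef.normSq_apply_le {ι : Type*} [Fintype ι] {R : Matrix ι ι ℂ}
    (hR : R.PosSemidef) (x y : ι) :
    Complex.normSq (R x y) ≤ (R x x).re * (R y y).re := by
  have hdet := (hR.submatrix ![x, y]).det_nonneg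
  have hx := (Complex.nonneg_iff.1 (hR.diag_nonneg (i := x))).2
  have hy := (Complex.nonneg_iff.1 (hR.diag_nonneg (i := y))).2
  rw [det_fin_two, Complex.nonneg_iff] at hdet
  simpa [← hR.isHermitian.apply y x, Complex.mul_re, ← hx, ← hy, Complex.normSq_apply] using hdet.1

theorem Matrix.PosSemidef.re_apply_le_sqrt_mul_sqrt {ι : Type*} [Fintype ι] {R : Matrix ι ι ℂ}
    (hR : R.PosSemidef) (x y : ι) :
    (R x y).re ≤ √(R x x).re * √(R y y).re := by
  have hx : 0 ≤ (R x x).re := hR.diag_nonneg.1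
  calc (R x y).re ≤ |(R x y).re| := le_abs_self _
    _ ≤ √((R x x).re * (R y y).re) :=
      Real.abs_le_sqrt (by nlinarith [Complex.re_sq_le_normSq (R x y), hR.normSq_apply_le x y])
    _ = √(R x x).re * √(R y y).re := Real.sqrt_mul hx _

theorem sqrt_add_sub_sqrt_add_sq_le {a b c : ℝ} (ha : 0 ≤ a) (hb : 0 ≤ b) (hc : 0 ≤ c) :
    (√(a + c) - √(b + c)) ^ 2 ≤ (√a - √b) ^ 2 := by
  have key : c + √a * √b ≤ √(a + c) * √(b + c) := by
    rw [← Real.sqrt_mul (by linarith : 0 ≤ a + c)]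
    apply Real.le_sqrt_of_sq_le
    nlinarith [sq_nonneg (√a - √b), Real.sq_sqrt ha, Real.sq_sqrt hb]
  rw [sub_sq, sub_sq, Real.sq_sqrt ha, Real.sq_sqrt hb, Real.sq_sqrt (by linarith),
    Real.sq_sqrt (by linarith)]
  linarith

theorem trace_swapM_mul {n : ℕ} (R : Matrix (Fin n × Fin n) (Fin n × Fin n) ℂ) :
    (swapM n * R).trace = ∑ x, R x.swap x := by
  refine Finset.sum_congr rfl fun x _ => ?_
  have hswap (y : Fin n × Fin n) : (x.1 = y.2 ∧ x.2 = y.1) ↔ y = x.swap := by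
    rw [Prod.ext_iff]; exact ⟨fun h => ⟨h.2.symm, h.1.symm⟩, fun h => ⟨h.2.symm, h.1.symm⟩⟩
  simp [mul_apply, swapM, hswap]

theorem trace_CQ_mul {n : ℕ} (R : Matrix (Fin n × Fin n) (Fin n × Fin n) ℂ) :
    (CQ n * R).trace = (R.trace - ∑ x, R x.swap x) / 2 := by
  rw [CQ, smul_mul, trace_smul, sub_mul, one_mul, trace_sub, trace_swapM_mul, smul_eq_mul]
  ring

theorem re_trace_CQ_two_mul (R : Matrix (Fin 2 × Fin 2) (Fin 2 × Fin 2) ℂ) :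
    ((CQ 2 * R).trace).re = ((R (0, 1) (0, 1)).re + (R (1, 0) (1, 0)).re -
      (R (1, 0) (0, 1)).re - (R (0, 1) (1, 0)).re) / 2 := by
  rw [trace_CQ_mul, Complex.div_ofNat_re]
  simp only [trace, diag_apply, Fintype.sum_prod_type, Fin.sum_univ_two, Prod.swap_prod_mk,
    Complex.sub_re, Complex.add_re]
  ring

theorem trace_eq_trace_trB {m n : ℕ} (R : Matrix (Fin m × Fin n) (Fin m × Fin n) ℂ) :
    R.trace = (trB R).trace := by
  simp [trace, trB, Fintype.sum_prod_type]

theorem sum_re_apply_of_trB_eq_diagonal {m n : ℕ} {R : Matrix (Fin m × Fin n) (Fin m × Fin n) ℂ}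
    {s : Fin m → ℝ} (h : trB R = diagonal fun i => (s i : ℂ)) (i : Fin m) :
    ∑ p, (R (i, p) (i, p)).re = s i := by
  simpa [trB] using congrArg Complex.re (congrFun₂ h i i)

theorem sum_re_apply_of_trA_eq_diagonal {m n : ℕ} {R : Matrix (Fin m × Fin n) (Fin m × Fin n) ℂ}
    {t : Fin n → ℝ} (h : trA R = diagonal fun p => (t p : ℂ)) (p : Fin n) :
    ∑ i, (R (i, p) (i, p)).re = t p := by
  simpa [trA] using congrArg Complex.re (congrFun₂ h p p)

theorem sq_sqrt_sub_sqrt_le_two_mul_re_trace_CQ_two_mul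
    {R : Matrix (Fin 2 × Fin 2) (Fin 2 × Fin 2) ℂ} (hR : R.PosSemidef) :
    (√(R (0, 1) (0, 1)).re - √(R (1, 0) (1, 0)).re) ^ 2 ≤ 2 * ((CQ 2 * R).trace).re := by
  have hb : 0 ≤ (R (0, 1) (0, 1)).re := hR.diag_nonneg.1
  have hc : 0 ≤ (R (1, 0) (1, 0)).re := hR.diag_nonneg.1
  have h₁ := hR.re_apply_le_sqrt_mul_sqrt (1, 0) (0, 1)
  have h₂ := hR.re_apply_le_sqrt_mul_sqrt (0, 1) (1, 0)
  rw [re_trace_CQ_two_mul, sub_sq, Real.sq_sqrt hb, Real.sq_sqrt hc]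
  linarith

theorem max_sq_sqrt_sub_sqrt_le_two_mul_re_trace_CQ_two_mul {s t : Fin 2 → ℝ}
    {R : Matrix (Fin 2 × Fin 2) (Fin 2 × Fin 2) ℂ}
    (hR : R ∈ QCouplings (diagonal fun i => (s i : ℂ)) (diagonal fun i => (t i : ℂ))) :
    max ((√(s 0) - √(t 0)) ^ 2) ((√(s 1) - √(t 1)) ^ 2) ≤ 2 * ((CQ 2 * R).trace).re := by
  obtain ⟨⟨hpsd, -⟩, hA, hB⟩ := hR
  set a := (R (0, 0) (0, 0)).re
  set b := (R (0, 1) (0, 1)).re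
  set c := (R (1, 0) (1, 0)).re
  have hs (i : Fin 2) := sum_re_apply_of_trB_eq_diagonal hA i
  have ht (p : Fin 2) := sum_re_apply_of_trA_eq_diagonal hB p
  simp only [Fin.sum_univ_two] at hs ht
  have h₀ : (√(s 0) - √(t 0)) ^ 2 ≤ (√b - √c) ^ 2 := by
    rw [← hs 0, ← ht 0, add_comm a, add_comm a]
    exact sqrt_add_sub_sqrt_add_sq_le hpsd.diag_nonneg.1 hpsd.diag_nonneg.1 hpsd.diag_nonneg.1
  have h₁ : (√(s 1) - √(t 1)) ^ 2 ≤ (√b - √c) ^ 2 := by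
    rw [← hs 1, ← ht 1, sub_sq_comm √b]
    exact sqrt_add_sub_sqrt_add_sq_le hpsd.diag_nonneg.1 hpsd.diag_nonneg.1 hpsd.diag_nonneg.1
  exact (max_le h₀ h₁).trans (sq_sqrt_sub_sqrt_le_two_mul_re_trace_CQ_two_mul hpsd)

/-- `a |00⟩⟨00| + d |11⟩⟨11| + |v⟩⟨v|` with `v = √b |01⟩ + √c |10⟩`. -/
noncomputable def qubitCoupling (a b c d : ℝ) : Matrix (Fin 2 × Fin 2) (Fin 2 × Fin 2) ℂ :=
  let v : Fin 2 × Fin 2 → ℂ := fun x => ((![![0, √b], ![√c, 0]] x.1 x.2 : ℝ) : ℂ)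
  diagonal (fun x => ((![![a, 0], ![0, d]] x.1 x.2 : ℝ) : ℂ)) + vecMulVec v (star v)

section qubitCoupling

variable {a b c d : ℝ}

theorem qubitCoupling_posSemidef (ha : 0 ≤ a) (hd : 0 ≤ d) :
    (qubitCoupling a b c d).PosSemidef := by
  refine .add (.diagonal fun x => ?_) (posSemidef_vecMulVec_self_star _)
  fin_cases x <;> simp [ha, hd]

theorem trB_qubitCoupling (hb : 0 ≤ b) (hc : 0 ≤ c) :
    trB (qubitCoupling a b c d) = diagonal ![(a + b : ℂ), c + d] := by
  ext i j
  fin_cases i <;> fin_cases j <;>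
    simp [trB, qubitCoupling, vecMulVec, Fin.sum_univ_two, ← Complex.ofReal_mul, hb, hc]

theorem trA_qubitCoupling (hb : 0 ≤ b) (hc : 0 ≤ c) :
    trA (qubitCoupling a b c d) = diagonal ![(a + c : ℂ), b + d] := by
  ext i j
  fin_cases i <;> fin_cases j <;>
    simp [trA, qubitCoupling, vecMulVec, Fin.sum_univ_two, ← Complex.ofReal_mul, hb, hc]

theorem re_trace_CQ_two_mul_qubitCoupling (hb : 0 ≤ b) (hc : 0 ≤ c) :
    ((CQ 2 * qubitCoupling a b c d).trace).re = (1 / 2) * (√b - √c) ^ 2 := by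
  rw [re_trace_CQ_two_mul, sub_sq, Real.sq_sqrt hb, Real.sq_sqrt hc]
  simp [qubitCoupling, vecMulVec, ← Complex.ofReal_mul, hb, hc]
  ring

theorem qubitCoupling_mem_QCouplings {s t : Fin 2 → ℝ}
    (ha : 0 ≤ a) (hb : 0 ≤ b) (hc : 0 ≤ c) (hd : 0 ≤ d)
    (hs₀ : a + b = s 0) (hs₁ : c + d = s 1) (ht₀ : a + c = t 0) (ht₁ : b + d = t 1)
    (hsum : ∑ i, s i = 1) :
    qubitCoupling a b c d ∈
      QCouplings (diagonal fun i => (s i : ℂ)) (diagonal fun i => (t i : ℂ)) := by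
  have hB : trB (qubitCoupling a b c d) = diagonal fun i => (s i : ℂ) := by
    rw [trB_qubitCoupling hb hc]
    congr 1; ext i; fin_cases i <;> simp [← hs₀, ← hs₁]
  have hA : trA (qubitCoupling a b c d) = diagonal fun i => (t i : ℂ) := by
    rw [trA_qubitCoupling hb hc]
    congr 1; ext i; fin_cases i <;> simp [← ht₀, ← ht₁]
  refine ⟨⟨qubitCoupling_posSemidef ha hd, ?_⟩, hB, hA⟩
  rw [trace_eq_trace_trB, hB, trace_diagonal, ← Complex.ofReal_sum, hsum, Complex.ofReal_one]

end qubitCoupling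

theorem exists_mem_QCouplings_re_trace_eq {s t : Fin 2 → ℝ}
    (hs : (∀ i, 0 ≤ s i) ∧ ∑ i, s i = 1) (ht : (∀ i, 0 ≤ t i) ∧ ∑ i, t i = 1) :
    ∃ R ∈ QCouplings (diagonal fun i => (s i : ℂ)) (diagonal fun i => (t i : ℂ)),
      ((CQ 2 * R).trace).re = (1 / 2) * max ((√(s 0) - √(t 0)) ^ 2) ((√(s 1) - √(t 1)) ^ 2) := by
  obtain ⟨hs, hsum⟩ := hs
  obtain ⟨ht, htsum⟩ := ht
  have hs₁ : s 1 = 1 - s 0 := by rw [Fin.sum_univ_two] at hsum; linarith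
  have ht₁ : t 1 = 1 - t 0 := by rw [Fin.sum_univ_two] at htsum; linarith
  rcases le_total (s 0 + t 0) 1 with h | h
  · have hd : 0 ≤ 1 - s 0 - t 0 := by linarith
    refine ⟨qubitCoupling 0 (s 0) (t 0) (1 - s 0 - t 0), qubitCoupling_mem_QCouplings le_rfl
      (hs 0) (ht 0) hd (by ring) (by linarith) (by ring) (by linarith) hsum, ?_⟩
    have hle : (√(s 1) - √(t 1)) ^ 2 ≤ (√(s 0) - √(t 0)) ^ 2 := by
      rw [sub_sq_comm √(s 0)]
      convert sqrt_add_sub_sqrt_add_sq_le (ht 0) (hs 0) hd using 4 <;> linarith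
    rw [re_trace_CQ_two_mul_qubitCoupling (hs 0) (ht 0), max_eq_left hle]
  · have ha : 0 ≤ s 0 + t 0 - 1 := by linarith
    refine ⟨qubitCoupling (s 0 + t 0 - 1) (t 1) (s 1) 0, qubitCoupling_mem_QCouplings ha
      (ht 1) (hs 1) le_rfl (by linarith) (by ring) (by linarith) (by ring) hsum, ?_⟩
    have hle : (√(s 0) - √(t 0)) ^ 2 ≤ (√(s 1) - √(t 1)) ^ 2 := by
      rw [sub_sq_comm √(s 1)]
      convert sqrt_add_sub_sqrt_add_sq_le (ht 1) (hs 1) ha using 4 <;> linarith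
    rw [re_trace_CQ_two_mul_qubitCoupling (ht 1) (hs 1), max_eq_right hle, sub_sq_comm]

/-- closed formula for the transport cost between two diagonal qubits. -/
theorem qot_diag_qubit (s t : Fin 2 → ℝ)
    (hs : (∀ i, 0 ≤ s i) ∧ ∑ i, s i = 1)
    (ht : (∀ i, 0 ≤ t i) ∧ ∑ i, t i = 1) :
    QOT (CQ 2) (Matrix.diagonal fun i => (s i : ℂ)) (Matrix.diagonal fun i => (t i : ℂ)) =
      (1 / 2) * max ((Real.sqrt (s 0) - Real.sqrt (t 0)) ^ 2)
        ((Real.sqrt (s 1) - Real.sqrt (t 1)) ^ 2) := by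
  refine IsLeast.csInf_eq ⟨exists_mem_QCouplings_re_trace_eq hs ht, ?_⟩
  rintro _ ⟨R, hR, rfl⟩
  linarith [max_sq_sqrt_sub_sqrt_le_two_mul_re_trace_CQ_two_mul hR]
end

section
/- For θ ∈ ℝ let O(θ) be the real rotation matrix [[cos(θ/2), −sin(θ/2)], [sin(θ/2), cos(θ/2)]], and for s ∈ [0,1] let ρ(s,θ) := O(θ) * diag(s, 1−s) * O(θ)ᵀ, regarded as a 2×2 complex matrix; then ρ(s,θ) ∈ Ω_2. For every s ∈ [0,1] and every θ with 0 ≤ θ < 2π, the quantum optimal transport cost between the isospectral qubits ρ(s,0) and ρ(s,θ) equals T_{C^Q}(ρ(s,0), ρ(s,θ)) = (1/2 − √(s·(1−s))) · sin²(θ/2). -/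
open Matrix ComplexOrder

/-- The rotation matrix `O(θ)`. -/
noncomputable def rotM (θ : ℝ) : Matrix (Fin 2) (Fin 2) ℝ :=
  !![Real.cos (θ / 2), -Real.sin (θ / 2); Real.sin (θ / 2), Real.cos (θ / 2)]

/-- The qubit state `ρ(s,θ) = O(θ) diag(s, 1-s) O(θ)ᵀ`, as a complex matrix. -/
noncomputable def rhoST (s θ : ℝ) : Matrix (Fin 2) (Fin 2) ℂ :=
  (rotM θ * Matrix.diagonal ![s, 1 - s] * (rotM θ)ᵀ).map (fun x => (x : ℂ))

/-!
Write `a = √s`, `b = √(1 - s)`, `c = cos (θ / 2)`, `t = sin (θ / 2)`. The pure state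
`ψ = (a c, a t, b t, -b c)` has marginals `ρ(s,0)` and `ρ(s,θ)` and cost `(1/2 - a b) t²`.
For `a, b > 0` this is optimal by weak duality: with `σ = t (a - b) / (2 (a + b))`, the pair
`X = σ [[t b / a, -c], [-c, -t a / b]]`, `Y = σ [[-t, c], [c, t]]` makes `C^Q - X ⊗ 1 - 1 ⊗ Y`
a nonnegative combination of three rank-one positive matrices, while `tr (X ρ(s,0)) = 0` and
`tr (Y ρ(s,θ)) = (1/2 - a b) t²`. When `a b = 0` the dual optimum is not attained; instead
`ρ(s,0)` is pure, and positivity of a coupling `R` kills its rows over the kernel of `ρ(s,0)`,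
which pins `tr (C^Q R)` to half a diagonal entry of `ρ(s,θ)`.
-/

theorem Matrix.PosSemidef.re_trace_mul_nonneg {ι : Type*} [Fintype ι] [DecidableEq ι]
    {P R : Matrix ι ι ℂ} (hP : P.PosSemidef) (hR : R.PosSemidef) : 0 ≤ (P * R).trace.re := by
  open scoped MatrixOrder in
  obtain ⟨B, rfl⟩ := CStarAlgebra.nonneg_iff_eq_star_mul_self.mp hP.nonneg
  rw [Matrix.star_eq_conjTranspose, Matrix.mul_assoc, Matrix.trace_mul_comm]
  exact (Complex.nonneg_iff.mp (hR.mul_mul_conjTranspose_same B).trace_nonneg).1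

theorem Matrix.PosSemidef.apply_eq_zero_of_diag_eq_zero {ι : Type*} [Fintype ι] [DecidableEq ι]
    {A : Matrix ι ι ℂ} (hA : A.PosSemidef) {i : ι} (hi : A i i = 0) (j : ι) :
    A j i = 0 ∧ A i j = 0 := by
  have hcol : A *ᵥ Pi.single i 1 = 0 := (hA.dotProduct_mulVec_zero_iff _).mp (by simp [hi])
  have hji : A j i = 0 := by simpa [Matrix.mulVec_single_one] using congrFun hcol j
  refine ⟨hji, ?_⟩
  rw [← hA.1.apply i j, hji, star_zero]

section PartialTrace

variable {m n : ℕ}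

theorem trace_kron_one_mul (X : Matrix (Fin m) (Fin m) ℂ)
    (R : Matrix (Fin m × Fin n) (Fin m × Fin n) ℂ) :
    (kron X 1 * R).trace = (X * trB R).trace := by
  simp [kron, trB, Matrix.trace, Matrix.mul_apply, Fintype.sum_prod_type, Matrix.one_apply,
    Finset.mul_sum]
  exact Finset.sum_congr rfl fun _ _ => Finset.sum_comm

theorem trace_one_kron_mul (Y : Matrix (Fin n) (Fin n) ℂ)
    (R : Matrix (Fin m × Fin n) (Fin m × Fin n) ℂ) :
    (kron 1 Y * R).trace = (Y * trA R).trace := by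
  simp [kron, trA, Matrix.trace, Matrix.mul_apply, Fintype.sum_prod_type, Matrix.one_apply,
    Finset.mul_sum]
  rw [Finset.sum_comm]
  exact Finset.sum_congr rfl fun _ _ => Finset.sum_comm

theorem re_trace_add_le_re_trace_mul_of_mem_QCouplings
    {C : Matrix (Fin m × Fin n) (Fin m × Fin n) ℂ} {X ρA : Matrix (Fin m) (Fin m) ℂ}
    {Y ρB : Matrix (Fin n) (Fin n) ℂ} (hC : (C - kron X 1 - kron 1 Y).PosSemidef)
    {R : Matrix (Fin m × Fin n) (Fin m × Fin n) ℂ} (hR : R ∈ QCouplings ρA ρB) :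
    (X * ρA).trace.re + (Y * ρB).trace.re ≤ (C * R).trace.re := by
  obtain ⟨⟨hRpsd, -⟩, hRA, hRB⟩ := hR
  have hsplit : C * R = (C - kron X 1 - kron 1 Y) * R + kron X 1 * R + kron 1 Y * R := by
    simp only [Matrix.sub_mul]; abel
  have := hC.re_trace_mul_nonneg hRpsd
  rw [hsplit, Matrix.trace_add, Matrix.trace_add, trace_kron_one_mul, trace_one_kron_mul, hRA, hRB]
  simp only [Complex.add_re]
  linarith

noncomputable def outerVec (M : Matrix (Fin m) (Fin n) ℂ) :
    Matrix (Fin m × Fin n) (Fin m × Fin n) ℂ :=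
  vecMulVec (fun x => M x.1 x.2) (star fun x => M x.1 x.2)

end PartialTrace

theorem trace_CQ_two_mul (R : Matrix (Fin 2 × Fin 2) (Fin 2 × Fin 2) ℂ) :
    (CQ 2 * R).trace =
      (R (0, 1) (0, 1) + R (1, 0) (1, 0) - R (0, 1) (1, 0) - R (1, 0) (0, 1)) / 2 := by
  simp [CQ, swapM, Matrix.trace, Matrix.mul_apply, Matrix.sub_apply, Matrix.one_apply,
    Fintype.sum_prod_type, Fin.sum_univ_two, Prod.ext_iff]
  ring

theorem trace_CQ_two_mul_of_trB_apply_eq_zero {R : Matrix (Fin 2 × Fin 2) (Fin 2 × Fin 2) ℂ}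
    (hR : R.PosSemidef) {i : Fin 2} (hi : trB R i i = 0) :
    (CQ 2 * R).trace = trA R i i / 2 := by
  have hsum : R (i, 0) (i, 0) + R (i, 1) (i, 1) = 0 := by
    simpa [trB, Fin.sum_univ_two] using hi
  obtain ⟨h0, h1⟩ := (add_eq_zero_iff_of_nonneg hR.diag_nonneg hR.diag_nonneg).mp hsum
  have hrow0 := hR.apply_eq_zero_of_diag_eq_zero h0
  have hrow1 := hR.apply_eq_zero_of_diag_eq_zero h1
  rw [trace_CQ_two_mul]
  fin_cases i <;> simp_all [trA, Fin.sum_univ_two]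

section Qubit

variable {a b c t : ℝ}

/-- `O diag(a², b²) Oᵀ` for the rotation `O = [[c, -t], [t, c]]`. -/
noncomputable def qubitState (a b c t : ℝ) : Matrix (Fin 2) (Fin 2) ℂ :=
  !![(a : ℂ) ^ 2 * c ^ 2 + b ^ 2 * t ^ 2, (a ^ 2 - b ^ 2) * c * t;
     (a ^ 2 - b ^ 2) * c * t, a ^ 2 * t ^ 2 + b ^ 2 * c ^ 2]

theorem qubitState_eq_mul_conjTranspose (a b c t : ℝ) :
    qubitState a b c t = !![(c * a : ℂ), -(t * b); t * a, c * b] *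
      (!![(c * a : ℂ), -(t * b); t * a, c * b])ᴴ := by
  ext i j
  fin_cases i <;> fin_cases j <;>
    simp [qubitState, Matrix.mul_apply, Fin.sum_univ_two, Complex.conj_ofReal] <;> ring

theorem isDensityMatrix_qubitState (hab : a ^ 2 + b ^ 2 = 1) (hct : c ^ 2 + t ^ 2 = 1) :
    IsDensityMatrix (qubitState a b c t) := by
  refine ⟨qubitState_eq_mul_conjTranspose a b c t ▸ posSemidef_self_mul_conjTranspose _, ?_⟩
  have habC : (a : ℂ) ^ 2 + b ^ 2 = 1 := by exact_mod_cast hab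
  have hctC : (c : ℂ) ^ 2 + t ^ 2 = 1 := by exact_mod_cast hct
  simp only [qubitState, Matrix.trace_fin_two_of]
  linear_combination (a ^ 2 + b ^ 2 : ℂ) * hctC + habC

noncomputable def optimalCoupling (a b c t : ℝ) : Matrix (Fin 2 × Fin 2) (Fin 2 × Fin 2) ℂ :=
  outerVec !![(a * c : ℂ), a * t; b * t, -(b * c)]

theorem optimalCoupling_mem_QCouplings (hab : a ^ 2 + b ^ 2 = 1) (hct : c ^ 2 + t ^ 2 = 1) :
    optimalCoupling a b c t ∈ QCouplings (qubitState a b 1 0) (qubitState a b c t) := by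
  have hctC : (c : ℂ) ^ 2 + t ^ 2 = 1 := by exact_mod_cast hct
  have hA : trB (optimalCoupling a b c t) = qubitState a b 1 0 := by
    ext i j
    fin_cases i <;> fin_cases j <;>
      simp [trB, optimalCoupling, outerVec, qubitState, vecMulVec, Complex.conj_ofReal] <;>
      grind
  refine ⟨⟨posSemidef_vecMulVec_self_star _, ?_⟩, hA, ?_⟩
  · rw [← trace_trB, hA]
    exact (isDensityMatrix_qubitState hab (by norm_num)).2
  · ext i j
    fin_cases i <;> fin_cases j <;>
      simp [trA, optimalCoupling, outerVec, qubitState, vecMulVec, Complex.conj_ofReal] <;> ring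

theorem trace_CQ_mul_optimalCoupling (hab : a ^ 2 + b ^ 2 = 1) :
    (CQ 2 * optimalCoupling a b c t).trace = ((1 / 2 - a * b) * t ^ 2 : ℝ) := by
  have habC : (a : ℂ) ^ 2 + b ^ 2 = 1 := by exact_mod_cast hab
  simp [trace_CQ_two_mul, optimalCoupling, outerVec, vecMulVec, Complex.conj_ofReal]
  linear_combination (t ^ 2 / 2 : ℂ) * habC

noncomputable def dualX (a b c t : ℝ) : Matrix (Fin 2) (Fin 2) ℂ :=
  ((t * (a - b) / (2 * (a + b)) : ℝ) : ℂ) • !![(t * b / a : ℂ), -c; -c, -(t * a / b)]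

noncomputable def dualY (a b c t : ℝ) : Matrix (Fin 2) (Fin 2) ℂ :=
  ((t * (a - b) / (2 * (a + b)) : ℝ) : ℂ) • !![-(t : ℂ), c; c, t]

theorem CQ_sub_kron_dual_eq (hct : c ^ 2 + t ^ 2 = 1) (ha : 0 < a) (hb : 0 < b) :
    CQ 2 - kron (dualX a b c t) 1 - kron 1 (dualY a b c t) =
      (t ^ 2 * (a - b) ^ 2 / (2 * a * b * (a + b) ^ 2)) • outerVec !![(b : ℂ), 0; 0, a]
      + (t ^ 2 / (2 * a * b)) • outerVec !![0, (b : ℂ); -a, 0]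
      + (1 / (2 * (a + b) ^ 2)) •
          outerVec !![-(t * (a - b) : ℂ), c * (a + b); -(c * (a + b)), t * (a - b)] := by
  have hctC : (c : ℂ) ^ 2 + t ^ 2 = 1 := by exact_mod_cast hct
  have ha' : (a : ℂ) ≠ 0 := by exact_mod_cast ha.ne'
  have hb' : (b : ℂ) ≠ 0 := by exact_mod_cast hb.ne'
  have hab' : (a : ℂ) + b ≠ 0 := by exact_mod_cast (add_pos ha hb).ne'
  ext ⟨i, p⟩ ⟨j, q⟩
  fin_cases i <;> fin_cases p <;> fin_cases j <;> fin_cases q <;>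
    simp [CQ, swapM, kron, dualX, dualY, outerVec, vecMulVec, Complex.conj_ofReal] <;>
    field_simp <;> grind

theorem posSemidef_CQ_sub_kron_dual (hct : c ^ 2 + t ^ 2 = 1) (ha : 0 < a) (hb : 0 < b) :
    (CQ 2 - kron (dualX a b c t) 1 - kron 1 (dualY a b c t)).PosSemidef := by
  rw [CQ_sub_kron_dual_eq hct ha hb]
  refine .add (.add (.smul ?_ ?_) (.smul ?_ ?_)) (.smul ?_ ?_)
  all_goals first | exact posSemidef_vecMulVec_self_star _ | positivity

theorem trace_dualX_mul_add_trace_dualY_mul (hab : a ^ 2 + b ^ 2 = 1)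
    (hct : c ^ 2 + t ^ 2 = 1) (ha : 0 < a) (hb : 0 < b) :
    (dualX a b c t * qubitState a b 1 0).trace + (dualY a b c t * qubitState a b c t).trace =
      ((1 / 2 - a * b) * t ^ 2 : ℝ) := by
  have habC : (a : ℂ) ^ 2 + b ^ 2 = 1 := by exact_mod_cast hab
  have hctC : (c : ℂ) ^ 2 + t ^ 2 = 1 := by exact_mod_cast hct
  have ha' : (a : ℂ) ≠ 0 := by exact_mod_cast ha.ne'
  have hb' : (b : ℂ) ≠ 0 := by exact_mod_cast hb.ne'
  have hab' : (a : ℂ) + b ≠ 0 := by exact_mod_cast (add_pos ha hb).ne'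
  simp [dualX, dualY, qubitState, Matrix.trace_fin_two]
  field_simp
  grind

theorem le_re_trace_CQ_mul_of_mem_QCouplings (hab : a ^ 2 + b ^ 2 = 1)
    (hct : c ^ 2 + t ^ 2 = 1) (ha : 0 ≤ a) (hb : 0 ≤ b)
    {R : Matrix (Fin 2 × Fin 2) (Fin 2 × Fin 2) ℂ}
    (hR : R ∈ QCouplings (qubitState a b 1 0) (qubitState a b c t)) :
    (1 / 2 - a * b) * t ^ 2 ≤ (CQ 2 * R).trace.re := by
  obtain ⟨⟨hRpsd, -⟩, hRA, hRB⟩ := id hR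
  rcases ha.eq_or_lt with rfl | ha
  · have hb2 : b ^ 2 = 1 := by linarith
    rw [trace_CQ_two_mul_of_trB_apply_eq_zero hRpsd (i := 0) (by simp [hRA, qubitState]), hRB]
    simp [qubitState, ← Complex.ofReal_pow, hb2, div_eq_inv_mul]
  rcases hb.eq_or_lt with rfl | hb
  · have ha2 : a ^ 2 = 1 := by linarith
    rw [trace_CQ_two_mul_of_trB_apply_eq_zero hRpsd (i := 1) (by simp [hRA, qubitState]), hRB]
    simp [qubitState, ← Complex.ofReal_pow, ha2, div_eq_inv_mul]
  have := re_trace_add_le_re_trace_mul_of_mem_QCouplings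
    (posSemidef_CQ_sub_kron_dual hct ha hb) hR
  rwa [← Complex.add_re, trace_dualX_mul_add_trace_dualY_mul hab hct ha hb,
    Complex.ofReal_re] at this

theorem QOT_CQ_qubitState (hab : a ^ 2 + b ^ 2 = 1) (hct : c ^ 2 + t ^ 2 = 1) (ha : 0 ≤ a)
    (hb : 0 ≤ b) :
    QOT (CQ 2) (qubitState a b 1 0) (qubitState a b c t) = (1 / 2 - a * b) * t ^ 2 := by
  refine IsLeast.csInf_eq
    ⟨⟨optimalCoupling a b c t, optimalCoupling_mem_QCouplings hab hct, ?_⟩, ?_⟩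
  · simp only [trace_CQ_mul_optimalCoupling hab, Complex.ofReal_re]
  · rintro _ ⟨R, hR, rfl⟩
    exact le_re_trace_CQ_mul_of_mem_QCouplings hab hct ha hb hR

end Qubit

theorem rhoST_eq_qubitState {s a b : ℝ} (ha : a ^ 2 = s) (hb : b ^ 2 = 1 - s) (θ : ℝ) :
    rhoST s θ = qubitState a b (Real.cos (θ / 2)) (Real.sin (θ / 2)) := by
  subst ha
  have hbC : (b : ℂ) ^ 2 = 1 - a ^ 2 := by exact_mod_cast hb
  have hT : (rotM θ)ᵀ =
      !![Real.cos (θ / 2), Real.sin (θ / 2); -Real.sin (θ / 2), Real.cos (θ / 2)] := by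
    ext i j; fin_cases i <;> fin_cases j <;> rfl
  rw [rhoST, hT, rotM, Matrix.diagonal_vec2, Matrix.mul_fin_two, Matrix.mul_fin_two]
  ext i j
  fin_cases i <;> fin_cases j <;> simp [qubitState, hbC] <;> ring

theorem qot_isospectral_qubits_general (s θ : ℝ) (hs0 : 0 ≤ s) (hs1 : s ≤ 1) :
    IsDensityMatrix (rhoST s θ) ∧
    QOT (CQ 2) (rhoST s 0) (rhoST s θ) =
      (1 / 2 - Real.sqrt (s * (1 - s))) * Real.sin (θ / 2) ^ 2 := by
  have ha := Real.sq_sqrt hs0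
  have hb := Real.sq_sqrt (sub_nonneg.mpr hs1)
  have hab : √s ^ 2 + √(1 - s) ^ 2 = 1 := by rw [ha, hb]; ring
  have hct := Real.cos_sq_add_sin_sq (θ / 2)
  have h0 : rhoST s 0 = qubitState √s √(1 - s) 1 0 := by simpa using rhoST_eq_qubitState ha hb 0
  rw [h0, rhoST_eq_qubitState ha hb θ, QOT_CQ_qubitState hab hct (Real.sqrt_nonneg _)
    (Real.sqrt_nonneg _), Real.sqrt_mul hs0]
  exact ⟨isDensityMatrix_qubitState hab hct, rfl⟩

/-- `ρ(s,θ)` is a density matrix and the transport cost between the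
isospectral qubits `ρ(s,0)` and `ρ(s,θ)` has a closed form. -/
theorem qot_isospectral_qubits (s θ : ℝ) (hs0 : 0 ≤ s) (hs1 : s ≤ 1)
    (hθ0 : 0 ≤ θ) (hθ1 : θ < 2 * Real.pi) :
    IsDensityMatrix (rhoST s θ) ∧
    QOT (CQ 2) (rhoST s 0) (rhoST s θ) =
      (1 / 2 - Real.sqrt (s * (1 - s))) * Real.sin (θ / 2) ^ 2 :=
  qot_isospectral_qubits_general s θ hs0 hs1
end

section
/- For all ρA, ρB ∈ Ω_n, T_{C^Q}(ρA, ρB) ≥ (1/2) · ( sup over unitary n×n complex matrices U of | √(Re((Uᴴ * ρA * U) 0 0)) − √(Re((Uᴴ * ρB * U) 0 0)) | )², where (·) 0 0 denotes the first diagonal entry and the supremum is attained by compactness of the unitary group. -/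
open Matrix ComplexOrder

/-!
Write a positive semidefinite `R` as a Gram matrix, `R x y = ⟪v x, v y⟫`. Then
`2 Re tr (C^Q R) = ½ ∑ₓ ‖v x - v x.swap‖²`; keeping only the terms with `x` in row or column `i`
leaves at least `∑ₚ ‖v (i, p) - v (p, i)‖²`, which by the triangle inequality in `ℓ²` dominates
`(√((tr_B R) i i) - √((tr_A R) i i))²`. Conjugating a coupling by `U ⊗ U`, which commutes with the
swap and intertwines both partial traces with conjugation by `U`, gives the bound for `Uᴴ ρ U`.
-/

open scoped Kronecker InnerProductSpace

theorem sq_sqrt_sum_sub_le {ι E : Type*} [Fintype ι] [SeminormedAddCommGroup E] (u w : ι → E) :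
    (√(∑ i, ‖u i‖ ^ 2) - √(∑ i, ‖w i‖ ^ 2)) ^ 2 ≤ ∑ i, ‖u i - w i‖ ^ 2 := by
  have h := abs_norm_sub_norm_le (WithLp.toLp 2 u) (WithLp.toLp 2 w)
  rw [← WithLp.toLp_sub, PiLp.norm_eq_of_L2, PiLp.norm_eq_of_L2, PiLp.norm_eq_of_L2] at h
  rw [← sq_abs, ← Real.sq_sqrt (Finset.sum_nonneg fun i _ => sq_nonneg ‖u i - w i‖)]
  exact pow_le_pow_left₀ (abs_nonneg _) h 2

theorem two_mul_sum_le_sum_of_symm {ι : Type*} [Fintype ι] [DecidableEq ι] {f : ι × ι → ℝ}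
    (hf : ∀ x, 0 ≤ f x) (hsymm : ∀ i j, f (i, j) = f (j, i)) {i₀ : ι} (h₀ : f (i₀, i₀) = 0) :
    2 * ∑ j, f (i₀, j) ≤ ∑ x, f x := by
  have hcol : ∑ i ∈ Finset.univ.erase i₀, f (i, i₀) = ∑ j, f (i₀, j) := by
    rw [Finset.sum_erase _ (by rwa [hsymm]), ← Finset.sum_congr rfl fun i _ => hsymm i₀ i]
  have hrows : ∑ i ∈ Finset.univ.erase i₀, f (i, i₀) ≤
      ∑ i ∈ Finset.univ.erase i₀, ∑ j, f (i, j) :=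
    Finset.sum_le_sum fun i _ => Finset.single_le_sum (fun j _ => hf (i, j)) (Finset.mem_univ i₀)
  have hsplit := Finset.add_sum_erase _ (fun i => ∑ j, f (i, j)) (Finset.mem_univ i₀)
  rw [Fintype.sum_prod_type, ← hsplit]
  linarith

theorem sSup_sq_le {S : Set ℝ} {c : ℝ} (hS : ∀ r ∈ S, 0 ≤ r ∧ r ^ 2 ≤ c) (hc : 0 ≤ c) :
    sSup S ^ 2 ≤ c := by
  have hle : sSup S ≤ √c :=
    Real.sSup_le (fun r hr => Real.le_sqrt_of_sq_le (hS r hr).2) (Real.sqrt_nonneg c)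
  simpa [Real.sq_sqrt hc] using pow_le_pow_left₀ (Real.sSup_nonneg fun r hr => (hS r hr).1) hle 2

theorem Matrix.PosSemidef.exists_eq_gram_s18 {k : Type*} [Fintype k] {R : Matrix k k ℂ}
    (hR : R.PosSemidef) : ∃ v : k → EuclideanSpace ℂ k, R = gram ℂ v := by
  classical
  open scoped MatrixOrder in
  obtain ⟨B, rfl⟩ := CStarAlgebra.nonneg_iff_eq_star_mul_self.mp hR.nonneg
  refine ⟨fun j => WithLp.toLp 2 (fun i => B i j), ?_⟩
  ext i j
  simp [mul_apply, PiLp.inner_apply, mul_comm]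

theorem trace_mul_conj_of_commute {k α : Type*} [Fintype k] [DecidableEq k] [CommSemiring α]
    {C W W' : Matrix k k α} (hCW : C * W = W * C) (hW : W * W' = 1) (R : Matrix k k α) :
    (C * (W' * R * W)).trace = (C * R).trace := by
  rw [← Matrix.mul_assoc, ← Matrix.mul_assoc, trace_mul_comm, ← Matrix.mul_assoc,
    ← Matrix.mul_assoc, ← hCW, Matrix.mul_assoc C, hW, Matrix.mul_one]

section PartialTrace

variable {m n : ℕ}

theorem trB_kronecker (A : Matrix (Fin m) (Fin m) ℂ) (B : Matrix (Fin n) (Fin n) ℂ) :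
    trB (A ⊗ₖ B) = B.trace • A := by
  ext i j
  simp [trB, trace, Finset.mul_sum, mul_comm]

theorem trA_kronecker (A : Matrix (Fin m) (Fin m) ℂ) (B : Matrix (Fin n) (Fin n) ℂ) :
    trA (A ⊗ₖ B) = A.trace • B := by
  ext p q
  simp [trA, trace, Finset.sum_mul]

theorem kronecker_mem_QCouplings {ρA : Matrix (Fin m) (Fin m) ℂ} {ρB : Matrix (Fin n) (Fin n) ℂ}
    (hA : IsDensityMatrix ρA) (hB : IsDensityMatrix ρB) : ρA ⊗ₖ ρB ∈ QCouplings ρA ρB :=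
  ⟨⟨hA.1.kronecker hB.1, by rw [trace_kronecker, hA.2, hB.2, one_mul]⟩,
    by rw [trB_kronecker, hB.2, one_smul], by rw [trA_kronecker, hA.2, one_smul]⟩

theorem trB_conjTranspose_kronecker_mul_mul (U : Matrix (Fin m) (Fin m) ℂ)
    {V : Matrix (Fin n) (Fin n) ℂ} (hV : V * Vᴴ = 1)
    (R : Matrix (Fin m × Fin n) (Fin m × Fin n) ℂ) :
    trB ((U ⊗ₖ V)ᴴ * R * (U ⊗ₖ V)) = Uᴴ * trB R * U := by
  have hδ (a b : Fin n) : ∑ p, star (V a p) * V b p = if a = b then 1 else 0 := by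
    simpa [mul_apply, one_apply, mul_comm, eq_comm] using congrFun (congrFun hV b) a
  ext i j
  calc ∑ p, ((U ⊗ₖ V)ᴴ * R * (U ⊗ₖ V)) (i, p) (j, p)
      = ∑ x, ∑ y, star (U x.1 i) * R x y * U y.1 j * ∑ p, star (V x.2 p) * V y.2 p := by
        simp only [mul_apply, conjTranspose_apply, kroneckerMap_apply, Finset.sum_mul,
          Finset.mul_sum, star_mul']
        rw [Finset.sum_comm]
        simp_rw [Finset.sum_comm (s := Finset.univ (α := Fin n))]
        rw [Finset.sum_comm]
        refine Finset.sum_congr rfl fun x _ => Finset.sum_congr rfl fun y _ =>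
          Finset.sum_congr rfl fun p _ => by ring
    _ = ∑ a, ∑ b, ∑ p, star (U a i) * R (a, p) (b, p) * U b j := by
        simp only [hδ, mul_ite, mul_one, mul_zero, Fintype.sum_prod_type, Finset.sum_ite_eq,
          Finset.mem_univ, if_true]
        exact Finset.sum_congr rfl fun a _ => Finset.sum_comm
    _ = (Uᴴ * trB R * U) i j := by
        simp only [mul_apply, conjTranspose_apply, trB, of_apply, Finset.sum_mul, Finset.mul_sum]
        exact Finset.sum_comm

theorem trA_conjTranspose_kronecker_mul_mul {U : Matrix (Fin m) (Fin m) ℂ}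
    (V : Matrix (Fin n) (Fin n) ℂ) (hU : U * Uᴴ = 1)
    (R : Matrix (Fin m × Fin n) (Fin m × Fin n) ℂ) :
    trA ((U ⊗ₖ V)ᴴ * R * (U ⊗ₖ V)) = Vᴴ * trA R * V := by
  have hδ (a b : Fin m) : ∑ i, star (U a i) * U b i = if a = b then 1 else 0 := by
    simpa [mul_apply, one_apply, mul_comm, eq_comm] using congrFun (congrFun hU b) a
  ext p q
  calc ∑ i, ((U ⊗ₖ V)ᴴ * R * (U ⊗ₖ V)) (i, p) (i, q)
      = ∑ x, ∑ y, star (V x.2 p) * R x y * V y.2 q * ∑ i, star (U x.1 i) * U y.1 i := by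
        simp only [mul_apply, conjTranspose_apply, kroneckerMap_apply, Finset.sum_mul,
          Finset.mul_sum, star_mul']
        rw [Finset.sum_comm]
        simp_rw [Finset.sum_comm (s := Finset.univ (α := Fin m))]
        rw [Finset.sum_comm]
        refine Finset.sum_congr rfl fun x _ => Finset.sum_congr rfl fun y _ =>
          Finset.sum_congr rfl fun i _ => by ring
    _ = ∑ i, ∑ a, ∑ b, star (V a p) * R (i, a) (i, b) * V b q := by
        simp only [hδ, mul_ite, mul_one, mul_zero, Fintype.sum_prod_type]
        refine Finset.sum_congr rfl fun i _ => Finset.sum_congr rfl fun a _ => ?_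
        rw [Finset.sum_comm]
        simp only [Finset.sum_ite_eq, Finset.mem_univ, if_true]
    _ = (Vᴴ * trA R * V) p q := by
        simp only [mul_apply, conjTranspose_apply, trA, of_apply, Finset.sum_mul, Finset.mul_sum]
        rw [Finset.sum_comm]
        simp_rw [Finset.sum_comm (γ := Fin m)]
        exact Finset.sum_comm

end PartialTrace

section SwapCost

variable {n : ℕ} {E : Type*} [SeminormedAddCommGroup E] [InnerProductSpace ℂ E]

theorem swapM_apply (x y : Fin n × Fin n) : swapM n x y = if y = x.swap then 1 else 0 := by
  simp [swapM, Prod.ext_iff, eq_comm, and_comm]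

theorem swapM_mul_apply (M : Matrix (Fin n × Fin n) (Fin n × Fin n) ℂ) (x y : Fin n × Fin n) :
    (swapM n * M) x y = M x.swap y := by
  simp [mul_apply, swapM_apply]

theorem mul_swapM_apply (M : Matrix (Fin n × Fin n) (Fin n × Fin n) ℂ) (x y : Fin n × Fin n) :
    (M * swapM n) x y = M x y.swap := by
  rw [mul_apply, ← (Equiv.prodComm _ _).sum_comp]
  simp [swapM_apply]

theorem swapM_mul_kronecker_self (U : Matrix (Fin n) (Fin n) ℂ) :
    swapM n * (U ⊗ₖ U) = (U ⊗ₖ U) * swapM n := by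
  ext x y
  simp [swapM_mul_apply, mul_swapM_apply, mul_comm]

theorem CQ_mul_kronecker_self (U : Matrix (Fin n) (Fin n) ℂ) :
    CQ n * (U ⊗ₖ U) = (U ⊗ₖ U) * CQ n := by
  simp only [CQ, smul_mul_assoc, mul_smul_comm, sub_mul, mul_sub, one_mul, mul_one,
    swapM_mul_kronecker_self]

theorem re_trace_CQ_mul_gram (v : Fin n × Fin n → E) :
    (CQ n * gram ℂ v).trace.re = (∑ x, ‖v x - v x.swap‖ ^ 2) / 4 := by
  have htrace : (CQ n * gram ℂ v).trace.re =
      (∑ x, ‖v x‖ ^ 2 - ∑ x, RCLike.re ⟪v x.swap, v x⟫_ℂ) / 2 := by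
    simp [CQ, sub_mul, trace, swapM_mul_apply, Complex.re_sum, ← Complex.ofReal_pow,
      ← Finset.mul_sum, Finset.sum_sub_distrib, div_eq_inv_mul]
  have hswap : ∑ x : Fin n × Fin n, ‖v x.swap‖ ^ 2 = ∑ x, ‖v x‖ ^ 2 :=
    Equiv.sum_comp (Equiv.prodComm _ _) fun x => ‖v x‖ ^ 2
  have hnorm : ∑ x, ‖v x - v x.swap‖ ^ 2 =
      2 * (∑ x, ‖v x‖ ^ 2 - ∑ x, RCLike.re ⟪v x.swap, v x⟫_ℂ) := by
    have hre (x : Fin n × Fin n) := inner_re_symm (𝕜 := ℂ) (v x) (v x.swap)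
    simp only [norm_sub_sq (𝕜 := ℂ), hre, Finset.sum_add_distrib, Finset.sum_sub_distrib, hswap,
      ← Finset.mul_sum]
    ring
  rw [htrace, hnorm]
  ring

theorem sq_sqrt_sub_le_re_trace_CQ_mul_gram (v : Fin n × Fin n → E) (i : Fin n) :
    (√(trB (gram ℂ v) i i).re - √(trA (gram ℂ v) i i).re) ^ 2 ≤
      2 * (CQ n * gram ℂ v).trace.re := by
  have hrow : (trB (gram ℂ v) i i).re = ∑ p, ‖v (i, p)‖ ^ 2 := by
    simp [trB, Complex.re_sum, ← inner_self_eq_norm_sq (𝕜 := ℂ)]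
  have hcol : (trA (gram ℂ v) i i).re = ∑ p, ‖v (p, i)‖ ^ 2 := by
    simp [trA, Complex.re_sum, ← inner_self_eq_norm_sq (𝕜 := ℂ)]
  have hcross := two_mul_sum_le_sum_of_symm (f := fun x => ‖v x - v x.swap‖ ^ 2)
    (fun _ => sq_nonneg _) (fun _ _ => by simp [norm_sub_rev]) (i₀ := i) (by simp)
  rw [hrow, hcol, re_trace_CQ_mul_gram]
  calc _ ≤ ∑ p, ‖v (i, p) - v (p, i)‖ ^ 2 := sq_sqrt_sum_sub_le _ _
    _ ≤ _ := by simp only [Prod.swap_prod_mk] at hcross; linarith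

theorem Matrix.PosSemidef.sq_sqrt_sub_le_re_trace_CQ_mul_conj
    {R : Matrix (Fin n × Fin n) (Fin n × Fin n) ℂ} (hR : R.PosSemidef)
    {U : Matrix (Fin n) (Fin n) ℂ} (hU : Uᴴ * U = 1) (i : Fin n) :
    (√((Uᴴ * trB R * U) i i).re - √((Uᴴ * trA R * U) i i).re) ^ 2 ≤
      2 * (CQ n * R).trace.re := by
  have hU' : U * Uᴴ = 1 := mul_eq_one_comm.mp hU
  have hW : (U ⊗ₖ U) * (U ⊗ₖ U)ᴴ = 1 := by
    rw [conjTranspose_kronecker, ← mul_kronecker_mul, hU', one_kronecker_one]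
  obtain ⟨v, hv⟩ := (hR.conjTranspose_mul_mul_same (U ⊗ₖ U)).exists_eq_gram_s18
  have h := sq_sqrt_sub_le_re_trace_CQ_mul_gram v i
  rwa [← hv, trB_conjTranspose_kronecker_mul_mul U hU' R,
    trA_conjTranspose_kronecker_mul_mul U hU' R,
    trace_mul_conj_of_commute (CQ_mul_kronecker_self U) hW] at h

end SwapCost

/-- a lower bound for `T_{C^Q}` in terms of the maximal difference of
square roots of first diagonal entries over all unitary conjugations. -/
theorem qot_CQ_diag_lower_bound (n : ℕ) [NeZero n]
    (ρA ρB : Matrix (Fin n) (Fin n) ℂ)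
    (hA : IsDensityMatrix ρA) (hB : IsDensityMatrix ρB) :
    (1 / 2) * (sSup {r : ℝ | ∃ U : Matrix (Fin n) (Fin n) ℂ, Uᴴ * U = 1 ∧
        r = |Real.sqrt (((Uᴴ * ρA * U) 0 0).re) -
              Real.sqrt (((Uᴴ * ρB * U) 0 0).re)|}) ^ 2 ≤
      QOT (CQ n) ρA ρB := by
  refine le_csInf ⟨_, _, kronecker_mem_QCouplings hA hB, rfl⟩ ?_
  rintro _ ⟨R, ⟨⟨hR, -⟩, rfl, rfl⟩, rfl⟩
  have key (U : Matrix (Fin n) (Fin n) ℂ) (hU : Uᴴ * U = 1) :=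
    hR.sq_sqrt_sub_le_re_trace_CQ_mul_conj hU 0
  have hc := (sq_nonneg _).trans (key 1 (by simp))
  calc _ ≤ 1 / 2 * (2 * (CQ n * R).trace.re) := by
        gcongr
        refine sSup_sq_le ?_ hc
        rintro _ ⟨U, hU, rfl⟩
        exact ⟨abs_nonneg _, (sq_abs _).trans_le (key U hU)⟩
    _ = _ := by ring
end
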